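/- arXiv:2108.08725 — 5 statements merged into one kernel-verified Lean document; each statement's English description precedes it below -/
import Mathlib

section
/- Let y > 0 and let f be twice differentiable at y with f(y) ≥ 0. Then |N[f](y)| ≤ (3/y³)·(|f(y)| + |y·f'(y)| + |y²·f''(y)|)². -/
/-!
Since `f y ≥ 0`, the first term of `N[f](y)` is at most `3 f(y)² / y³`, and the prefactor
`(2 + f') / (1 + (1 + f')²)` has absolute value at most `2`. Hence
`|N[f](y)| ≤ 3 f(y)² / y³ + 2 |f'| |f''|`, and both terms already occur in the expansion of
`(3 / y³) (f + y |f'| + y² |f''|)²`, the second one with coefficient `6`.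
-/

/-- The nonlinear operator
`N[f](y) = −3 f(y)²/(y²(y+f(y))) − ((2+f'(y))/(1+(1+f'(y))²)) f'(y) f''(y)`. -/
noncomputable def Nop (f : ℝ → ℝ) (y : ℝ) : ℝ :=
  -3 * (f y) ^ 2 / (y ^ 2 * (y + f y))
    - ((2 + deriv f y) / (1 + (1 + deriv f y) ^ 2)) * deriv f y * deriv (deriv f) y

lemma abs_two_add_div_one_add_one_add_sq_le_two (p : ℝ) :
    |(2 + p) / (1 + (1 + p) ^ 2)| ≤ 2 := by
  have hden : (0 : ℝ) < 1 + (1 + p) ^ 2 := by positivity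
  rw [abs_div, abs_of_pos hden, div_le_iff₀ hden, abs_le]
  constructor <;> nlinarith [sq_nonneg (4 * p + 3), sq_nonneg (4 * p + 5)]

lemma abs_neg_three_mul_sq_div_le {y a : ℝ} (hy : 0 < y) (ha : 0 ≤ a) :
    |-3 * a ^ 2 / (y ^ 2 * (y + a))| ≤ 3 / y ^ 3 * a ^ 2 := by
  rw [abs_div, abs_mul, abs_of_pos (by positivity : (0 : ℝ) < y ^ 2 * (y + a))]
  calc |(-3 : ℝ)| * |a ^ 2| / (y ^ 2 * (y + a)) ≤ 3 * a ^ 2 / (y ^ 2 * y) := by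
        rw [abs_neg, abs_of_nonneg (by norm_num : (0 : ℝ) ≤ 3), abs_sq]
        gcongr
        linarith
    _ = 3 / y ^ 3 * a ^ 2 := by ring

lemma three_div_pow_mul_sq_add_two_mul_le {y a b c : ℝ} (hy : 0 < y) (ha : 0 ≤ a) (hb : 0 ≤ b)
    (hc : 0 ≤ c) :
    3 / y ^ 3 * a ^ 2 + 2 * (b * c) ≤ 3 / y ^ 3 * (a + y * b + y ^ 2 * c) ^ 2 := by
  have hy3 : 0 < y ^ 3 := by positivity
  rw [div_mul_eq_mul_div, div_mul_eq_mul_div, div_add' _ _ _ hy3.ne',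
    div_le_div_iff_of_pos_right hy3]
  nlinarith [mul_nonneg (mul_nonneg ha hb) hy.le, mul_nonneg (mul_nonneg ha hc) (sq_nonneg y),
    mul_nonneg (mul_nonneg hb hc) hy3.le, sq_nonneg (y * b), sq_nonneg (y ^ 2 * c)]

theorem stmt_4_general (f : ℝ → ℝ) (y : ℝ) (hy : 0 < y)
    (hf : 0 ≤ f y) :
    |Nop f y| ≤ 3 / y ^ 3 * (|f y| + |y * deriv f y| + |y ^ 2 * deriv (deriv f) y|) ^ 2 := by
  calc |Nop f y| ≤ 3 / y ^ 3 * f y ^ 2 + 2 * (|deriv f y| * |deriv (deriv f) y|) := by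
        refine (abs_sub _ _).trans (add_le_add (abs_neg_three_mul_sq_div_le hy hf) ?_)
        rw [abs_mul, abs_mul, mul_assoc]
        exact mul_le_mul_of_nonneg_right (abs_two_add_div_one_add_one_add_sq_le_two _)
          (by positivity)
    _ ≤ _ := by
        rw [abs_of_nonneg hf, abs_mul y, abs_mul (y ^ 2), abs_of_pos hy, abs_of_pos (pow_pos hy 2)]
        exact three_div_pow_mul_sq_add_two_mul_le hy hf (abs_nonneg _) (abs_nonneg _)

/-- If `f(y) ≥ 0` then `|N[f](y)| ≤ (3/y³) ([f]₂(y))²` where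
`[f]₂ = |f| + |y f'| + |y² f''|`. -/
theorem stmt_4 (f : ℝ → ℝ) (y : ℝ) (hy : 0 < y)
    (hdiff : DifferentiableAt ℝ f y) (hdiff2 : DifferentiableAt ℝ (deriv f) y)
    (hf : 0 ≤ f y) :
    |Nop f y| ≤ 3 / y ^ 3 * (|f y| + |y * deriv f y| + |y ^ 2 * deriv (deriv f) y|) ^ 2 :=
  stmt_4_general f y hy hf
end

section
/- Let k ≥ 4 be an integer, K0 > 0, K1 = (2k+1)!!·K0, γ = k/3 − 1/2, p ∈ (2,3), and C_g > 0. Let g : (0,∞) → ℝ be smooth with |g(y)| + |y·g'(y)| + |y²·g''(y)| ≤ C_g·y^{−5}·(1+y^{4k−2}) for all y > 0. Then there exists C* > 0, depending only on k, K0 and C_g (not on B, δ, p), such that for every B > 0 there exist R(B) ≥ 1 and τ(B) ∈ ℝ with the following property: for every δ ∈ (0, K1/2) and every choice of sign, the function f_δ^±(y,τ) = (K1 ± δ)·e^{3γτ}·φ_k(y) ± (B·K1²·e^{6γτ}·g(y) + e^{(p+1)γτ}·y^{−p}) satisfies f_δ^±(y,τ) > 0 and |N[f_δ^±(·,τ)](y)|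 ≤ C*·e^{6γτ}·(y^{−7} + y^{4k−7}) for all (y,τ) with R(B)·e^{γτ} ≤ y ≤ e^{−τ/2} and τ ≤ τ(B). -/
open Filter Set

/-- The eigenfunction `φ_k(y) = y^{-2} Σ_{n=0}^k (binom(k,n)/(2n+1)!!) y^{2n}`. -/
noncomputable def phik (k : ℕ) (y : ℝ) : ℝ :=
  y ^ (-2 : ℤ) * ∑ n ∈ Finset.range (k + 1),
    ((k.choose n : ℝ) / (Nat.doubleFactorial (2 * n + 1) : ℝ)) * y ^ (2 * n)

/-- The intermediate-region candidate barriers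
`f_δ^±(y,τ) = (K1 ± δ) e^{3γτ} φ_k(y) ± (B K1² e^{6γτ} g(y) + e^{(p+1)γτ} y^{-p})`
(with sign `ε = ±1`). -/
noncomputable def fbar (k : ℕ) (K1 γ B p : ℝ) (g : ℝ → ℝ) (δ ε y τ : ℝ) : ℝ :=
  (K1 + ε * δ) * Real.exp (3 * γ * τ) * phik k y
    + ε * (B * K1 ^ 2 * Real.exp (6 * γ * τ) * g y
        + Real.exp ((p + 1) * γ * τ) * y ^ (-p))

lemma zpow_sandwich {y : ℝ} (hy : 0 < y) {a m b : ℤ} (ham : a ≤ m) (hmb : m ≤ b) :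
    y ^ m ≤ y ^ a + y ^ b := by
  rcases le_total y 1 with h | h
  · have h1 : y ^ m ≤ y ^ a := zpow_le_zpow_right_of_le_one₀ hy h ham
    have h2 : 0 < y ^ b := zpow_pos hy b
    linarith
  · have h1 : y ^ m ≤ y ^ b := zpow_le_zpow_right₀ h hmb
    have h2 : 0 < y ^ a := zpow_pos (by linarith) a
    linarith

lemma Qbd (d : ℝ) : |(2 + d) / (1 + (1 + d) ^ 2)| ≤ 3 / 2 := by
  have hpos : (0:ℝ) < 1 + (1 + d) ^ 2 := by positivity
  rw [abs_div, abs_of_pos hpos, div_le_iff₀ hpos]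
  rcases abs_cases (2 + d) with ⟨h, _⟩ | ⟨h, _⟩ <;> rw [h] <;> nlinarith [sq_nonneg (1+d), sq_nonneg (1-d), sq_nonneg (3+d)]

/-- first summand: `P0`. -/
noncomputable def P0 (k : ℕ) (y : ℝ) : ℝ :=
  ∑ n ∈ Finset.range (k + 1),
    ((k.choose n : ℝ) / (Nat.doubleFactorial (2 * n + 1) : ℝ)) * y ^ (2 * n)

noncomputable def P1 (k : ℕ) (y : ℝ) : ℝ :=
  ∑ n ∈ Finset.range (k + 1),
    ((k.choose n : ℝ) / (Nat.doubleFactorial (2 * n + 1) : ℝ)) * ((2*n : ℕ) : ℝ) * y ^ (2 * n - 1)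

noncomputable def P2 (k : ℕ) (y : ℝ) : ℝ :=
  ∑ n ∈ Finset.range (k + 1),
    ((k.choose n : ℝ) / (Nat.doubleFactorial (2 * n + 1) : ℝ)) * ((2*n : ℕ) : ℝ) * ((2*n - 1 : ℕ) : ℝ) * y ^ (2 * n - 2)

lemma hasDerivAt_P0 (k : ℕ) (y : ℝ) : HasDerivAt (P0 k) (P1 k y) y := by
  apply HasDerivAt.fun_sum
  intro n _
  have := ((hasDerivAt_pow (2*n) y).const_mul ((k.choose n : ℝ) / (Nat.doubleFactorial (2 * n + 1) : ℝ)))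
  exact this.congr_deriv (by ring)

lemma hasDerivAt_P1 (k : ℕ) (y : ℝ) : HasDerivAt (P1 k) (P2 k y) y := by
  apply HasDerivAt.fun_sum
  intro n _
  have := ((hasDerivAt_pow (2*n-1) y).const_mul (((k.choose n : ℝ) / (Nat.doubleFactorial (2 * n + 1) : ℝ)) * ((2*n : ℕ) : ℝ)))
  refine this.congr_deriv ?_
  have : 2*n - 1 - 1 = 2*n - 2 := by omega
  rw [this]
  ring

noncomputable def phi1 (k : ℕ) (y : ℝ) : ℝ :=
  (-2) * y ^ (-3 : ℤ) * P0 k y + y ^ (-2 : ℤ) * P1 k y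

noncomputable def phi2 (k : ℕ) (y : ℝ) : ℝ :=
  6 * y ^ (-4 : ℤ) * P0 k y + (-4) * y ^ (-3 : ℤ) * P1 k y + y ^ (-2 : ℤ) * P2 k y

lemma hasDerivAt_phik (k : ℕ) {y : ℝ} (hy : y ≠ 0) :
    HasDerivAt (phik k) (phi1 k y) y := by
  have h1 : HasDerivAt (fun x : ℝ => x ^ (-2 : ℤ)) (((-2 : ℤ) : ℝ) * y ^ (-3 : ℤ)) y := by
    simpa using hasDerivAt_zpow (-2) y (Or.inl hy)
  have := h1.fun_mul (hasDerivAt_P0 k y)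
  refine this.congr_deriv ?_
  unfold phi1; push_cast; ring

lemma hasDerivAt_phi1 (k : ℕ) {y : ℝ} (hy : y ≠ 0) :
    HasDerivAt (phi1 k) (phi2 k y) y := by
  have h3 : HasDerivAt (fun x : ℝ => x ^ (-3 : ℤ)) (((-3 : ℤ) : ℝ) * y ^ (-4 : ℤ)) y := by
    simpa using hasDerivAt_zpow (-3) y (Or.inl hy)
  have h2 : HasDerivAt (fun x : ℝ => x ^ (-2 : ℤ)) (((-2 : ℤ) : ℝ) * y ^ (-3 : ℤ)) y := by
    simpa using hasDerivAt_zpow (-2) y (Or.inl hy)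
  have := ((h3.fun_mul (hasDerivAt_P0 k y)).const_mul (-2)).fun_add (h2.fun_mul (hasDerivAt_P1 k y))
  refine HasDerivAt.congr_of_eventuallyEq (this.congr_deriv ?_) (Filter.Eventually.of_forall fun x => ?_)
  · unfold phi2; push_cast; ring
  · beta_reduce; unfold phi1; push_cast; ring

noncomputable def Dk (k : ℕ) : ℝ := (Nat.doubleFactorial (2*k+1) : ℝ)
noncomputable def Mk (k : ℕ) : ℝ := ((2*k+3 : ℕ) : ℝ)^2 * 2^k

lemma Dk_pos (k : ℕ) : 0 < Dk k := by
  unfold Dk; exact_mod_cast Nat.doubleFactorial_pos _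

lemma Mk_pos (k : ℕ) : 0 < Mk k := by unfold Mk; positivity

lemma pow_le_one_add {y : ℝ} (hy : 0 < y) {n m : ℕ} (h : n ≤ m) : y ^ n ≤ 1 + y ^ m := by
  rcases le_total y 1 with h1 | h1
  · have := pow_le_one₀ hy.le h1 (n := n)
    have : (0:ℝ) ≤ y ^ m := by positivity
    nlinarith [pow_le_one₀ hy.le h1 (n := n)]
  · have := pow_le_pow_right₀ h1 h
    nlinarith

lemma coef_le (k n : ℕ) :
    (k.choose n : ℝ) / (Nat.doubleFactorial (2 * n + 1) : ℝ) ≤ (k.choose n : ℝ) := by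
  apply div_le_self (by positivity)
  exact_mod_cast Nat.doubleFactorial_pos _

lemma coef_nonneg (k n : ℕ) :
    0 ≤ (k.choose n : ℝ) / (Nat.doubleFactorial (2 * n + 1) : ℝ) := by positivity

lemma choose_sum (k : ℕ) : ∑ n ∈ Finset.range (k+1), (k.choose n : ℝ) = 2^k := by
  exact_mod_cast congrArg (Nat.cast : ℕ → ℝ) (Nat.sum_range_choose k)

lemma P0_nonneg (k : ℕ) {y : ℝ} (hy : 0 < y) : 0 ≤ P0 k y :=
  Finset.sum_nonneg fun n _ => by positivity

lemma P1_nonneg (k : ℕ) {y : ℝ} (hy : 0 < y) : 0 ≤ P1 k y :=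
  Finset.sum_nonneg fun n _ => by positivity

lemma P2_nonneg (k : ℕ) {y : ℝ} (hy : 0 < y) : 0 ≤ P2 k y :=
  Finset.sum_nonneg fun n _ => by positivity

lemma P0_le (k : ℕ) {y : ℝ} (hy : 0 < y) : P0 k y ≤ 2^k * (1 + y^(2*k)) := by
  have h : P0 k y ≤ ∑ n ∈ Finset.range (k+1), (k.choose n : ℝ) * (1 + y^(2*k)) := by
    apply Finset.sum_le_sum
    intro n hn
    have hn' : 2*n ≤ 2*k := by
      have := Finset.mem_range.mp hn; omega
    have h1 := pow_le_one_add hy hn'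
    have h2 := coef_le k n
    have h3 : (0:ℝ) ≤ y ^ (2*n) := by positivity
    nlinarith [coef_nonneg k n]
  calc P0 k y ≤ _ := h
    _ = 2^k * (1 + y^(2*k)) := by rw [← Finset.sum_mul, choose_sum]

lemma P1_le (k : ℕ) {y : ℝ} (hy : 0 < y) : P1 k y * y ≤ (2*k) * 2^k * (1 + y^(2*k)) := by
  have h : P1 k y * y ≤ ∑ n ∈ Finset.range (k+1), (k.choose n : ℝ) * ((2*k:ℕ):ℝ) * (1 + y^(2*k)) := by
    unfold P1; rw [Finset.sum_mul]
    apply Finset.sum_le_sum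
    intro n hn
    rcases Nat.eq_zero_or_pos n with rfl | hn0
    · simp; positivity
    have he : y ^ (2*n-1) * y = y ^ (2*n) := by
      rw [← pow_succ]; congr 1; omega
    have hn' : 2*n ≤ 2*k := by have := Finset.mem_range.mp hn; omega
    have h1 := pow_le_one_add hy hn'
    have h2 := coef_le k n
    have h3 : (0:ℝ) ≤ y ^ (2*n) := by positivity
    have h4 : ((2*n:ℕ):ℝ) ≤ ((2*k:ℕ):ℝ) := by exact_mod_cast hn'
    have h5 : (0:ℝ) ≤ ((2*n:ℕ):ℝ) := by positivity
    calc (k.choose n : ℝ) / (Nat.doubleFactorial (2 * n + 1) : ℝ) * ((2*n : ℕ) : ℝ) * y ^ (2 * n - 1) * y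
        = ((k.choose n : ℝ) / (Nat.doubleFactorial (2 * n + 1) : ℝ)) * ((2*n : ℕ) : ℝ) * y ^ (2 * n) := by
          rw [mul_assoc _ _ y, he]
      _ ≤ (k.choose n : ℝ) * ((2*k:ℕ):ℝ) * (1 + y^(2*k)) := by
          have hA := mul_le_mul h2 h4 h5 (Nat.cast_nonneg (k.choose n))
          exact mul_le_mul hA h1 h3 (by positivity)
  calc P1 k y * y ≤ _ := h
    _ = (2*k) * 2^k * (1 + y^(2*k)) := by
        rw [← Finset.sum_mul, ← Finset.sum_mul, choose_sum]; push_cast; ring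

lemma P2_le (k : ℕ) {y : ℝ} (hy : 0 < y) : P2 k y * y^2 ≤ (2*k)^2 * 2^k * (1 + y^(2*k)) := by
  have h : P2 k y * y^2 ≤ ∑ n ∈ Finset.range (k+1), (k.choose n : ℝ) * ((2*k:ℕ):ℝ)^2 * (1 + y^(2*k)) := by
    unfold P2; rw [Finset.sum_mul]
    apply Finset.sum_le_sum
    intro n hn
    rcases Nat.eq_zero_or_pos n with rfl | hn0
    · simp; positivity
    have he : y ^ (2*n-2) * y^2 = y ^ (2*n) := by
      rw [← pow_add]; congr 1; omega
    have hn' : 2*n ≤ 2*k := by have := Finset.mem_range.mp hn; omega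
    have h1 := pow_le_one_add hy hn'
    have h2 := coef_le k n
    have h3 : (0:ℝ) ≤ y ^ (2*n) := by positivity
    have h4 : ((2*n:ℕ):ℝ) ≤ ((2*k:ℕ):ℝ) := by exact_mod_cast hn'
    have h6 : ((2*n-1:ℕ):ℝ) ≤ ((2*k:ℕ):ℝ) := by exact_mod_cast (by omega : 2*n-1 ≤ 2*k)
    have h5 : (0:ℝ) ≤ ((2*n:ℕ):ℝ) := by positivity
    have h7 : (0:ℝ) ≤ ((2*n-1:ℕ):ℝ) := by positivity
    calc (k.choose n : ℝ) / (Nat.doubleFactorial (2 * n + 1) : ℝ) * ((2*n : ℕ) : ℝ) * ((2*n-1 : ℕ) : ℝ) * y ^ (2 * n - 2) * y^2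
        = ((k.choose n : ℝ) / (Nat.doubleFactorial (2 * n + 1) : ℝ)) * ((2*n : ℕ) : ℝ) * ((2*n-1:ℕ):ℝ) * y ^ (2 * n) := by
          rw [mul_assoc _ _ (y^2), he]
      _ ≤ (k.choose n : ℝ) * ((2*k:ℕ):ℝ)^2 * (1 + y^(2*k)) := by
          have hcc : ((k.choose n : ℝ) / (Nat.doubleFactorial (2 * n + 1) : ℝ)) * ((2*n : ℕ) : ℝ) * ((2*n-1:ℕ):ℝ) ≤ (k.choose n : ℝ) * (((2*k:ℕ):ℝ) * ((2*k:ℕ):ℝ)) := by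
            have := mul_le_mul (mul_le_mul h2 h4 h5 (Nat.cast_nonneg _)) h6 h7 (by positivity)
            nlinarith
          calc _ ≤ ((k.choose n : ℝ) * (((2*k:ℕ):ℝ) * ((2*k:ℕ):ℝ))) * (1 + y^(2*k)) :=
                mul_le_mul hcc h1 h3 (by positivity)
            _ = (k.choose n : ℝ) * ((2*k:ℕ):ℝ)^2 * (1 + y^(2*k)) := by ring
  calc P2 k y * y^2 ≤ _ := h
    _ = (2*k)^2 * 2^k * (1 + y^(2*k)) := by
        rw [← Finset.sum_mul, ← Finset.sum_mul, choose_sum]; push_cast; ring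

lemma P0_ge (k : ℕ) (hk : 1 ≤ k) {y : ℝ} (hy : 0 < y) :
    (1 / Dk k) * (1 + y^(2*k)) ≤ P0 k y := by
  have hsub : ({0, k} : Finset ℕ) ⊆ Finset.range (k+1) := by
    intro n hn
    simp only [Finset.mem_insert, Finset.mem_singleton] at hn
    rcases hn with rfl | rfl <;> simp [Finset.mem_range] <;> omega
  have hlow : ∑ n ∈ ({0, k} : Finset ℕ), ((k.choose n : ℝ) / (Nat.doubleFactorial (2 * n + 1) : ℝ)) * y ^ (2 * n) ≤ P0 k y := by
    apply Finset.sum_le_sum_of_subset_of_nonneg hsub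
    intro n _ _; positivity
  have hne : (0:ℕ) ≠ k := by omega
  rw [Finset.sum_pair hne] at hlow
  have hD1 : (1:ℝ) ≤ Dk k := by
    unfold Dk; exact_mod_cast Nat.one_le_iff_ne_zero.mpr (Nat.doubleFactorial_pos _).ne'
  have hDpos := Dk_pos k
  have e0 : ((k.choose 0 : ℝ) / (Nat.doubleFactorial (2 * 0 + 1) : ℝ)) * y ^ (2 * 0) = 1 := by
    simp [Nat.doubleFactorial]
  have ek : ((k.choose k : ℝ) / (Nat.doubleFactorial (2 * k + 1) : ℝ)) * y ^ (2 * k) = (1 / Dk k) * y ^ (2*k) := by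
    simp [Nat.choose_self, Dk]
  rw [e0, ek] at hlow
  have h1 : (1 / Dk k) * 1 ≤ 1 := by
    rw [mul_one]
    exact div_le_one_of_le₀ hD1 hDpos.le
  have hyp : (0:ℝ) ≤ y^(2*k) := by positivity
  nlinarith

lemma zpow_mul_onead' {y : ℝ} (hy : 0 < y) (j : ℤ) (n : ℕ) :
    y ^ j * (1 + y ^ n) = y ^ j + y ^ (j + (n:ℤ)) := by
  rw [mul_add, mul_one, ← zpow_natCast y n, ← zpow_add₀ hy.ne']

lemma zpow_mul_onead {y : ℝ} (hy : 0 < y) (j : ℤ) (k : ℕ) :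
    y ^ j * (1 + y ^ (2*k)) = y ^ j + y ^ (j + 2*(k:ℤ)) := by
  rw [zpow_mul_onead' hy j (2*k)]
  norm_num

lemma phik_eq (k : ℕ) (y : ℝ) : phik k y = y ^ (-2:ℤ) * P0 k y := rfl

lemma phik_ge (k : ℕ) (hk : 1 ≤ k) {y : ℝ} (hy : 0 < y) :
    (1 / Dk k) * (y ^ (-2:ℤ) + y ^ (2*(k:ℤ)-2)) ≤ phik k y := by
  have h := P0_ge k hk hy
  have hz : (0:ℝ) < y ^ (-2:ℤ) := zpow_pos hy _
  have := mul_le_mul_of_nonneg_left h hz.le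
  rw [phik_eq]
  calc (1 / Dk k) * (y ^ (-2:ℤ) + y ^ (2*(k:ℤ)-2))
      = y ^ (-2:ℤ) * ((1 / Dk k) * (1 + y^(2*k))) := by
        have key : y^(-2:ℤ) * (1 + y^(2*k)) = y^(-2:ℤ) + y^(2*(k:ℤ)-2) := by
          rw [zpow_mul_onead hy, show (-2 + 2*(k:ℤ)) = 2*(k:ℤ)-2 by ring]
        rw [← key]; ring
    _ ≤ y ^ (-2:ℤ) * P0 k y := this

lemma phik_nonneg (k : ℕ) {y : ℝ} (hy : 0 < y) : 0 ≤ phik k y := by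
  rw [phik_eq]
  exact mul_nonneg (zpow_pos hy _).le (P0_nonneg k hy)

lemma phik_le (k : ℕ) {y : ℝ} (hy : 0 < y) :
    phik k y ≤ Mk k * (y ^ (-2:ℤ) + y ^ (2*(k:ℤ)-2)) := by
  rw [phik_eq]
  have hz : (0:ℝ) < y ^ (-2:ℤ) := zpow_pos hy _
  have h := mul_le_mul_of_nonneg_left (P0_le k hy) hz.le
  calc y ^ (-2:ℤ) * P0 k y ≤ y ^ (-2:ℤ) * (2^k * (1 + y^(2*k))) := h
    _ = (2:ℝ)^k * (y ^ (-2:ℤ) + y ^ (-2 + 2*(k:ℤ))) := by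
        rw [← zpow_mul_onead hy]; ring
    _ ≤ Mk k * (y ^ (-2:ℤ) + y ^ (2*(k:ℤ)-2)) := by
        have he : (-2 + 2*(k:ℤ)) = 2*(k:ℤ)-2 := by ring
        rw [he]
        apply mul_le_mul_of_nonneg_right _ (by positivity)
        unfold Mk
        have : (1:ℝ) ≤ ((2*k+3:ℕ):ℝ)^2 := by
          have : (1:ℝ) ≤ ((2*k+3:ℕ):ℝ) := by exact_mod_cast Nat.one_le_iff_ne_zero.mpr (by omega)
          nlinarith
        nlinarith [pow_pos (by norm_num : (0:ℝ) < 2) k]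

lemma phi1_abs (k : ℕ) {y : ℝ} (hy : 0 < y) :
    |phi1 k y| ≤ Mk k * (y ^ (-3:ℤ) + y ^ (2*(k:ℤ)-3)) := by
  have e2 : y ^ (-2:ℤ) = y ^ (-3:ℤ) * y := by
    rw [← zpow_add_one₀ hy.ne']; norm_num
  have e : phi1 k y = y ^ (-3:ℤ) * (-2 * P0 k y + P1 k y * y) := by
    unfold phi1; rw [e2]; ring
  have hz : (0:ℝ) < y ^ (-3:ℤ) := zpow_pos hy _
  have hP0 := P0_nonneg k hy
  have hP0u := P0_le k hy
  have hP1 := P1_nonneg k hy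
  have hP1u := P1_le k hy
  have hP1y : 0 ≤ P1 k y * y := mul_nonneg hP1 hy.le
  have habs : |(-2 * P0 k y + P1 k y * y)| ≤ 2 * P0 k y + P1 k y * y := by
    rw [abs_le]; constructor <;> nlinarith
  have h1pk : (0:ℝ) ≤ 1 + y^(2*k) := by positivity
  calc |phi1 k y| = y ^ (-3:ℤ) * |(-2 * P0 k y + P1 k y * y)| := by
        rw [e, abs_mul, abs_of_pos hz]
    _ ≤ y ^ (-3:ℤ) * ((2 + 2*k) * 2^k * (1 + y^(2*k))) := by
        apply mul_le_mul_of_nonneg_left _ hz.le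
        calc |(-2 * P0 k y + P1 k y * y)| ≤ 2 * P0 k y + P1 k y * y := habs
          _ ≤ 2 * (2^k * (1 + y^(2*k))) + (2*k) * 2^k * (1 + y^(2*k)) := by linarith
          _ = (2 + 2*k) * 2^k * (1 + y^(2*k)) := by ring
    _ = (2 + 2*(k:ℝ)) * 2^k * (y ^ (-3:ℤ) + y ^ (-3 + 2*(k:ℤ))) := by
        rw [← zpow_mul_onead hy]; ring
    _ ≤ Mk k * (y ^ (-3:ℤ) + y ^ (2*(k:ℤ)-3)) := by
        have he : (-3 + 2*(k:ℤ)) = 2*(k:ℤ)-3 := by ring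
        rw [he]
        apply mul_le_mul_of_nonneg_right _ (by positivity)
        unfold Mk
        have h23 : ((2*k+3:ℕ):ℝ) = 2*(k:ℝ)+3 := by push_cast; ring
        rw [h23]
        nlinarith [pow_pos (by norm_num : (0:ℝ) < 2) k, sq_nonneg ((k:ℝ)), Nat.cast_nonneg (α := ℝ) k]

lemma phi2_abs (k : ℕ) {y : ℝ} (hy : 0 < y) :
    |phi2 k y| ≤ Mk k * (y ^ (-4:ℤ) + y ^ (2*(k:ℤ)-4)) := by
  have e3 : y ^ (-3:ℤ) = y ^ (-4:ℤ) * y := by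
    rw [← zpow_add_one₀ hy.ne']; norm_num
  have e2 : y ^ (-2:ℤ) = y ^ (-4:ℤ) * y^2 := by
    rw [← zpow_natCast y 2, ← zpow_add₀ hy.ne']; norm_num
  have e : phi2 k y = y ^ (-4:ℤ) * (6 * P0 k y + (-4) * (P1 k y * y) + P2 k y * y^2) := by
    unfold phi2; rw [e3, e2]; ring
  have hz : (0:ℝ) < y ^ (-4:ℤ) := zpow_pos hy _
  have hP0 := P0_nonneg k hy
  have hP0u := P0_le k hy
  have hP1 := P1_nonneg k hy
  have hP1u := P1_le k hy
  have hP2 := P2_nonneg k hy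
  have hP2u := P2_le k hy
  have hP1y : 0 ≤ P1 k y * y := mul_nonneg hP1 hy.le
  have hP2y : 0 ≤ P2 k y * y^2 := mul_nonneg hP2 (by positivity)
  have habs : |(6 * P0 k y + (-4) * (P1 k y * y) + P2 k y * y^2)| ≤ 6 * P0 k y + 4 * (P1 k y * y) + P2 k y * y^2 := by
    rw [abs_le]; constructor <;> nlinarith
  calc |phi2 k y| = y ^ (-4:ℤ) * |(6 * P0 k y + (-4) * (P1 k y * y) + P2 k y * y^2)| := by
        rw [e, abs_mul, abs_of_pos hz]
    _ ≤ y ^ (-4:ℤ) * ((6 + 8*(k:ℝ) + 4*(k:ℝ)^2) * 2^k * (1 + y^(2*k))) := by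
        apply mul_le_mul_of_nonneg_left _ hz.le
        calc |(6 * P0 k y + (-4) * (P1 k y * y) + P2 k y * y^2)|
            ≤ 6 * P0 k y + 4 * (P1 k y * y) + P2 k y * y^2 := habs
          _ ≤ 6 * (2^k * (1 + y^(2*k))) + 4 * ((2*k) * 2^k * (1 + y^(2*k))) + (2*k)^2 * 2^k * (1 + y^(2*k)) := by linarith
          _ = (6 + 8*(k:ℝ) + 4*(k:ℝ)^2) * 2^k * (1 + y^(2*k)) := by push_cast; ring
    _ = (6 + 8*(k:ℝ) + 4*(k:ℝ)^2) * 2^k * (y ^ (-4:ℤ) + y ^ (-4 + 2*(k:ℤ))) := by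
        rw [← zpow_mul_onead hy]; ring
    _ ≤ Mk k * (y ^ (-4:ℤ) + y ^ (2*(k:ℤ)-4)) := by
        have he : (-4 + 2*(k:ℤ)) = 2*(k:ℤ)-4 := by ring
        rw [he]
        apply mul_le_mul_of_nonneg_right _ (by positivity)
        unfold Mk
        have h23 : ((2*k+3:ℕ):ℝ) = 2*(k:ℝ)+3 := by push_cast; ring
        rw [h23]
        nlinarith [pow_pos (by norm_num : (0:ℝ) < 2) k, Nat.cast_nonneg (α := ℝ) k]

lemma zpow_split {y : ℝ} (hy : 0 < y) {a b c : ℤ} (h : a = b + c) : y ^ a = y ^ b * y ^ c := by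
  rw [h, zpow_add₀ hy.ne']

lemma exp_div_pow_bound {a y R : ℝ} (ha : 0 < a) (hR : 0 < R) (hy : R * a ≤ y) (n : ℕ) :
    a ^ n * y ^ (-(n:ℤ)) ≤ (1/R) ^ n := by
  have hy0 : 0 < y := lt_of_lt_of_le (by positivity) hy
  have h1 : a / y ≤ 1 / R := by
    rw [div_le_div_iff₀ hy0 hR]; nlinarith
  have h2 := pow_le_pow_left₀ (by positivity) h1 n
  calc a ^ n * y ^ (-(n:ℤ)) = (a/y) ^ n := by
        rw [div_pow, div_eq_mul_inv, ← zpow_natCast y n, ← zpow_neg]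
    _ ≤ (1/R) ^ n := h2

lemma le_mul_zpow_of_mul_le {A c y : ℝ} (hy : 0 < y) {j : ℤ} (h : A * y ^ j ≤ c) :
    A ≤ c * y ^ (-j) := by
  have hz : 0 < y ^ j := zpow_pos hy j
  rw [zpow_neg, ← div_eq_mul_inv, le_div_iff₀ hz]
  exact h
set_option maxHeartbeats 1000000 in
/-- Positivity of `f_δ^±` and the estimate `|N[f_δ^±]| ≤ C* e^{6γτ}(y^{-7}+y^{4k-7})`
in the intermediate region. -/
theorem stmt_5
    (k : ℕ) (hk : 4 ≤ k) (K0 : ℝ) (hK0 : 0 < K0)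
    (K1 : ℝ) (hK1 : K1 = (Nat.doubleFactorial (2 * k + 1) : ℝ) * K0)
    (γ : ℝ) (hγ : γ = (k : ℝ) / 3 - 1 / 2)
    (p : ℝ) (hp : p ∈ Set.Ioo (2:ℝ) 3)
    (Cg : ℝ) (hCg : 0 < Cg)
    (g : ℝ → ℝ) (hg : ContDiffOn ℝ (⊤ : ℕ∞) g (Set.Ioi 0))
    (hgbd : ∀ y > (0:ℝ), |g y| + |y * deriv g y| + |y ^ 2 * deriv (deriv g) y|
        ≤ Cg * y ^ (-5 : ℤ) * (1 + y ^ (4 * k - 2))) :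
    ∃ Cstar > (0:ℝ), ∀ B > (0:ℝ), ∃ R ≥ (1:ℝ), ∃ τB : ℝ,
      ∀ δ ∈ Set.Ioo (0:ℝ) (K1 / 2), ∀ ε : ℝ, (ε = 1 ∨ ε = -1) →
        ∀ τ ≤ τB, ∀ y : ℝ, R * Real.exp (γ * τ) ≤ y → y ≤ Real.exp (-τ / 2) →
          0 < fbar k K1 γ B p g δ ε y τ ∧
          |Nop (fun z => fbar k K1 γ B p g δ ε z τ) y|
            ≤ Cstar * Real.exp (6 * γ * τ) * (y ^ (-7 : ℤ) + y ^ (4 * k - 7)) := by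
  obtain ⟨hp2, hp3⟩ := hp
  have hkR : (4:ℝ) ≤ (k:ℝ) := by exact_mod_cast hk
  have hDpos := Dk_pos k
  have hMpos := Mk_pos k
  have hdfpos : (0:ℝ) < (Nat.doubleFactorial (2*k+1) : ℝ) := by
    exact_mod_cast Nat.doubleFactorial_pos _
  have hK1pos : 0 < K1 := by rw [hK1]; positivity
  have hγpos : 0 < γ := by rw [hγ]; linarith
  set M := Mk k with hM
  set C0 : ℝ := 2*K1*M + 1 with hC0
  set C1 : ℝ := 2*K1*M + 2 with hC1
  set C2 : ℝ := 2*K1*M + 5 with hC2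
  have hK1M : 0 < K1*M := mul_pos hK1pos hMpos
  have hC0p : 0 < C0 := by rw [hC0]; nlinarith
  have hC1p : 0 < C1 := by rw [hC1]; nlinarith
  have hC2p : 0 < C2 := by rw [hC2]; nlinarith
  refine ⟨12*C0^2 + 6*C1*C2, by nlinarith, ?_⟩
  intro B hB
  obtain ⟨m, hm⟩ : ∃ m : ℝ, m = min (K1/(8*Dk k)) (1/3 : ℝ) := ⟨_, rfl⟩
  have hmpos : 0 < m := by rw [hm]; exact lt_min (by positivity) (by norm_num)
  have hm3 : m ≤ 1/3 := by rw [hm]; exact min_le_right _ _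
  have hmK : m ≤ K1/(8*Dk k) := by rw [hm]; exact min_le_left _ _
  obtain ⟨X, hX⟩ : ∃ X : ℝ, X = B*K1^2*Cg := ⟨_, rfl⟩
  have hXpos : 0 < X := by rw [hX]; positivity
  obtain ⟨R, hR⟩ : ∃ R : ℝ, R = max (max 1 (X/m)) ((1/m) ^ ((p-2)⁻¹)) := ⟨_, rfl⟩
  have hR1 : (1:ℝ) ≤ R := by rw [hR]; exact le_trans (le_max_left 1 (X/m)) (le_max_left _ _)
  have hRpos : 0 < R := lt_of_lt_of_le one_pos hR1
  refine ⟨R, hR1, Real.log (m/X), ?_⟩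
  rintro δ ⟨hδ0, hδK⟩ ε hε τ hτ y hyR hyU
  have ha : 0 < Real.exp (γ*τ) := Real.exp_pos _
  have hy : 0 < y := lt_of_lt_of_le (by positivity) hyR
  have hE3 : 0 < Real.exp (3*γ*τ) := Real.exp_pos _
  have hE6 : Real.exp (6*γ*τ) = Real.exp (3*γ*τ) * Real.exp (3*γ*τ) := by
    rw [← Real.exp_add]; ring_nf
  -- ε facts
  have hε1 : |ε| = 1 := by rcases hε with rfl | rfl <;> simp
  have hεsq : ε^2 = 1 := by rcases hε with rfl | rfl <;> norm_num
  -- Key smallness (KA)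
  have hRXm : X / m ≤ R := by rw [hR]; exact le_trans (le_max_right 1 (X/m)) (le_max_left _ _)
  have hRmX : 1/R ≤ m/X := by
    rw [div_le_div_iff₀ hRpos hXpos]
    have : X ≤ R * m := by
      rw [div_le_iff₀ hmpos] at hRXm; linarith
    linarith
  have hKA : X * (Real.exp (3*γ*τ) * y^(-3:ℤ)) ≤ m := by
    have e1 : Real.exp (3*γ*τ) = Real.exp (γ*τ) ^ 3 := by
      rw [show (3:ℝ)*γ*τ = (3:ℕ)*(γ*τ) by push_cast; ring, Real.exp_nat_mul]
    have hA1 : Real.exp (γ*τ) ^ 3 * y ^ (-((3:ℕ):ℤ)) ≤ (1/R)^3 :=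
      exp_div_pow_bound ha hRpos hyR 3
    have hA2 : ((1:ℝ)/R)^3 ≤ 1/R := by
      have h1 : (1:ℝ)/R ≤ 1 := by rw [div_le_one hRpos]; exact hR1
      calc ((1:ℝ)/R)^3 ≤ (1/R)^1 := pow_le_pow_of_le_one (by positivity) h1 (by norm_num)
        _ = 1/R := pow_one _
    have : Real.exp (3*γ*τ) * y^(-3:ℤ) ≤ m/X := by
      rw [e1]
      calc Real.exp (γ*τ) ^ 3 * y ^ (-3:ℤ) = Real.exp (γ*τ) ^ 3 * y ^ (-((3:ℕ):ℤ)) := by norm_num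
        _ ≤ (1/R)^3 := hA1
        _ ≤ 1/R := hA2
        _ ≤ m/X := hRmX
    calc X * (Real.exp (3*γ*τ) * y^(-3:ℤ)) ≤ X * (m/X) := by
          exact mul_le_mul_of_nonneg_left this hXpos.le
      _ = m := by field_simp
  -- (KB)
  have hexpτ : Real.exp τ ≤ m / X := by
    have := Real.exp_le_exp.mpr hτ
    rwa [Real.exp_log (by positivity)] at this
  have hKB : X * (Real.exp (3*γ*τ) * y^(2*(k:ℤ)-5)) ≤ m := by
    have hc : (2*(k:ℤ)-5) = ((2*k-5 : ℕ) : ℤ) := by omega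
    have hyb : y ^ (2*k-5 : ℕ) ≤ Real.exp (-τ/2) ^ (2*k-5 : ℕ) :=
      pow_le_pow_left₀ hy.le hyU _
    have he2 : Real.exp (-τ/2) ^ (2*k-5 : ℕ) = Real.exp (((2*k-5:ℕ):ℝ) * (-τ/2)) := by
      rw [Real.exp_nat_mul]
    have hcastR : ((2*k-5:ℕ):ℝ) = 2*(k:ℝ)-5 := by
      push_cast [Nat.cast_sub (by omega : 5 ≤ 2*k)]; ring
    have hkey : Real.exp (3*γ*τ) * y^(2*(k:ℤ)-5) ≤ Real.exp τ := by
      rw [hc, zpow_natCast]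
      calc Real.exp (3*γ*τ) * y ^ (2*k-5:ℕ) ≤ Real.exp (3*γ*τ) * Real.exp (((2*k-5:ℕ):ℝ) * (-τ/2)) := by
            rw [← he2]; exact mul_le_mul_of_nonneg_left hyb hE3.le
        _ = Real.exp (3*γ*τ + ((2*k-5:ℕ):ℝ) * (-τ/2)) := (Real.exp_add _ _).symm
        _ = Real.exp τ := by
            congr 1
            rw [hcastR, hγ]; ring
    calc X * (Real.exp (3*γ*τ) * y^(2*(k:ℤ)-5)) ≤ X * (m/X) := by
          exact mul_le_mul_of_nonneg_left (hkey.trans hexpτ) hXpos.le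
      _ = m := by field_simp
  -- (KC)
  have hKC : Real.exp ((p-2)*(γ*τ)) * y ^ (2-p) ≤ m := by
    have hRa : 0 < R * Real.exp (γ*τ) := by positivity
    have h1 : y ^ (2-p) ≤ (R * Real.exp (γ*τ)) ^ (2-p) :=
      Real.rpow_le_rpow_of_nonpos hRa hyR (by linarith)
    have h2 : (R * Real.exp (γ*τ)) ^ (2-p) = R^(2-p) * Real.exp ((2-p)*(γ*τ)) := by
      rw [Real.mul_rpow hRpos.le ha.le]
      congr 1
      rw [Real.rpow_def_of_pos ha, Real.log_exp, mul_comm]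
    have h3 : R ^ (2-p) ≤ m := by
      have hRge : (1/m) ^ ((p-2)⁻¹) ≤ R := by rw [hR]; exact le_max_right _ _
      have hbase : (0:ℝ) < (1/m) ^ ((p-2)⁻¹) := Real.rpow_pos_of_pos (by positivity) _
      have hmono := Real.rpow_le_rpow_of_nonpos hbase hRge (by linarith : 2-p ≤ 0)
      have e : (((1:ℝ)/m) ^ ((p-2)⁻¹)) ^ (2-p) = m := by
        rw [← Real.rpow_mul (by positivity : (0:ℝ) ≤ 1/m),
          show ((p-2)⁻¹ * (2-p)) = -1 by
            rw [inv_mul_eq_div, div_eq_iff (show p-2 ≠ 0 by linarith)]; ring,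
          Real.rpow_neg_one, one_div, inv_inv]
      linarith [hmono, e ▸ hmono]
    calc Real.exp ((p-2)*(γ*τ)) * y ^ (2-p)
        ≤ Real.exp ((p-2)*(γ*τ)) * (R^(2-p) * Real.exp ((2-p)*(γ*τ))) := by
          apply mul_le_mul_of_nonneg_left _ (Real.exp_pos _).le
          rw [← h2]; exact h1
      _ = R^(2-p) * (Real.exp ((p-2)*(γ*τ)) * Real.exp ((2-p)*(γ*τ))) := by ring
      _ = R^(2-p) := by
          rw [← Real.exp_add, show ((p-2)*(γ*τ) + (2-p)*(γ*τ)) = 0 by ring, Real.exp_zero, mul_one]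
      _ ≤ m := h3
  -- g bounds
  have hG : Cg * y ^ (-5:ℤ) * (1 + y^(4*k-2)) = Cg * (y^(-5:ℤ) + y^(4*(k:ℤ)-7)) := by
    rw [mul_assoc, zpow_mul_onead' hy (-5) (4*k-2),
      show ((-5:ℤ) + ((4*k-2:ℕ):ℤ)) = 4*(k:ℤ)-7 by omega]
  have hgy := hgbd y hy
  have habs1 : |y * deriv g y| = |deriv g y| * y := by
    rw [abs_mul, abs_of_pos hy]; ring
  have habs2 : |y^2 * deriv (deriv g) y| = |deriv (deriv g) y| * y^2 := by
    rw [abs_mul, abs_of_pos (by positivity : (0:ℝ) < y^2)]; ring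
  have hg0 : |g y| ≤ Cg * (y^(-5:ℤ) + y^(4*(k:ℤ)-7)) := by
    rw [← hG]
    linarith [abs_nonneg (y * deriv g y), abs_nonneg (y^2 * deriv (deriv g) y)]
  have hg1 : |deriv g y| ≤ Cg * (y^(-6:ℤ) + y^(4*(k:ℤ)-8)) := by
    have h0 : |deriv g y| * y ^ (1:ℤ) ≤ Cg * (y^(-5:ℤ) + y^(4*(k:ℤ)-7)) := by
      rw [zpow_one, ← hG, ← habs1]
      linarith [abs_nonneg (g y), abs_nonneg (y^2 * deriv (deriv g) y)]
    have h1 := le_mul_zpow_of_mul_le hy h0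
    calc |deriv g y| ≤ Cg * (y^(-5:ℤ) + y^(4*(k:ℤ)-7)) * y^(-(1:ℤ)) := h1
      _ = Cg * (y^(-6:ℤ) + y^(4*(k:ℤ)-8)) := by
          rw [mul_assoc, add_mul, ← zpow_add₀ hy.ne', ← zpow_add₀ hy.ne',
            show ((-5:ℤ) + -1) = -6 by ring, show (4*(k:ℤ)-7 + -1) = 4*(k:ℤ)-8 by ring]
  have hg2 : |deriv (deriv g) y| ≤ Cg * (y^(-7:ℤ) + y^(4*(k:ℤ)-9)) := by
    have h0 : |deriv (deriv g) y| * y ^ (2:ℤ) ≤ Cg * (y^(-5:ℤ) + y^(4*(k:ℤ)-7)) := by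
      rw [show (2:ℤ) = ((2:ℕ):ℤ) by norm_num, zpow_natCast, ← hG, ← habs2]
      linarith [abs_nonneg (g y), abs_nonneg (y * deriv g y)]
    have h1 := le_mul_zpow_of_mul_le hy h0
    calc |deriv (deriv g) y| ≤ Cg * (y^(-5:ℤ) + y^(4*(k:ℤ)-7)) * y^(-(2:ℤ)) := h1
      _ = Cg * (y^(-7:ℤ) + y^(4*(k:ℤ)-9)) := by
          rw [mul_assoc, add_mul, ← zpow_add₀ hy.ne', ← zpow_add₀ hy.ne',
            show ((-5:ℤ) + -2) = -7 by ring, show (4*(k:ℤ)-7 + -2) = 4*(k:ℤ)-9 by ring]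
  -- differentiability of g
  have hgd1 : ∀ z ∈ Set.Ioi (0:ℝ), DifferentiableAt ℝ g z := fun z hz =>
    (hg.differentiableOn (by simp)).differentiableAt (isOpen_Ioi.mem_nhds hz)
  have hgd2 : DifferentiableAt ℝ (deriv g) y :=
    ((hg.deriv_of_isOpen (m := 1) isOpen_Ioi (WithTop.coe_le_coe.mpr le_top)).differentiableOn one_ne_zero).differentiableAt
      (isOpen_Ioi.mem_nhds hy)
  -- coefficients
  obtain ⟨a1, ha1⟩ : ∃ a : ℝ, a = (K1 + ε*δ) * Real.exp (3*γ*τ) := ⟨_, rfl⟩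
  obtain ⟨a2, ha2⟩ : ∃ a : ℝ, a = B * K1^2 * Real.exp (6*γ*τ) := ⟨_, rfl⟩
  obtain ⟨a3, ha3⟩ : ∃ a : ℝ, a = Real.exp ((p+1)*γ*τ) := ⟨_, rfl⟩
  have ha2pos : 0 < a2 := by rw [ha2]; positivity
  have ha3pos : 0 < a3 := by rw [ha3]; exact Real.exp_pos _
  -- first derivative
  have hFd : ∀ z ∈ Set.Ioi (0:ℝ), HasDerivAt (fun z => fbar k K1 γ B p g δ ε z τ)
      (a1 * phi1 k z + ε * (a2 * deriv g z + a3 * (-p * z ^ (-p-1)))) z := by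
    intro z hz
    have hz0 : (0:ℝ) < z := hz
    have h1 := (hasDerivAt_phik k hz0.ne').const_mul a1
    have h2 : HasDerivAt g (deriv g z) z := (hgd1 z hz).hasDerivAt
    have h3 : HasDerivAt (fun x : ℝ => x ^ (-p)) (-p * z ^ (-p-1)) z :=
      Real.hasDerivAt_rpow_const (Or.inl hz0.ne')
    have h4 := ((h2.const_mul a2).fun_add (h3.const_mul a3)).const_mul ε
    have h5 := h1.fun_add h4
    refine HasDerivAt.congr_of_eventuallyEq h5 (Filter.Eventually.of_forall fun w => ?_)
    simp only [fbar]
    rw [ha1, ha2, ha3]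
  have hd1 : deriv (fun z => fbar k K1 γ B p g δ ε z τ) y
      = a1 * phi1 k y + ε * (a2 * deriv g y + a3 * (-p * y ^ (-p-1))) :=
    (hFd y hy).deriv
  have hd1ev : deriv (fun z => fbar k K1 γ B p g δ ε z τ)
      =ᶠ[nhds y] fun z => a1 * phi1 k z + ε * (a2 * deriv g z + a3 * (-p * z ^ (-p-1))) := by
    filter_upwards [isOpen_Ioi.mem_nhds hy] with z hz using (hFd z hz).deriv
  have hFd2 : HasDerivAt (fun z => a1 * phi1 k z + ε * (a2 * deriv g z + a3 * (-p * z ^ (-p-1))))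
      (a1 * phi2 k y + ε * (a2 * deriv (deriv g) y + a3 * (-p * ((-p-1) * y ^ (-p-2))))) y := by
    have h1 := (hasDerivAt_phi1 k hy.ne').const_mul a1
    have h2 : HasDerivAt (deriv g) (deriv (deriv g) y) y := hgd2.hasDerivAt
    have h3 : HasDerivAt (fun x : ℝ => x ^ (-p-1)) ((-p-1) * y ^ (-p-2)) y := by
      have := Real.hasDerivAt_rpow_const (x := y) (p := -p-1) (Or.inl hy.ne')
      rwa [show (-p-1-1) = -p-2 by ring] at this
    have h3' : HasDerivAt (fun x : ℝ => -p * x ^ (-p-1)) (-p * ((-p-1) * y ^ (-p-2))) y :=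
      h3.const_mul (-p)
    exact h1.add (((h2.const_mul a2).add (h3'.const_mul a3)).const_mul ε)
  have hd2 : deriv (deriv (fun z => fbar k K1 γ B p g δ ε z τ)) y
      = a1 * phi2 k y + ε * (a2 * deriv (deriv g) y + a3 * (-p * ((-p-1) * y ^ (-p-2)))) := by
    rw [hd1ev.deriv_eq]; exact hFd2.deriv
  -- basic bounds
  have hphilow := phik_ge k (by omega) hy
  have hphiup := phik_le k hy
  have hphinn := phik_nonneg k hy
  have hphi1 := phi1_abs k hy
  have hphi2 := phi2_abs k hy
  have hεδ : -δ ≤ ε*δ ∧ ε*δ ≤ δ := by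
    have : |ε*δ| = δ := by rw [abs_mul, hε1, one_mul, abs_of_pos hδ0]
    constructor <;> [linarith [neg_abs_le (ε*δ), this ▸ le_refl δ]; linarith [le_abs_self (ε*δ)]]
  have ha1low : K1/2 * Real.exp (3*γ*τ) ≤ a1 := by
    rw [ha1]
    apply mul_le_mul_of_nonneg_right _ hE3.le
    linarith [hεδ.1]
  have ha1up : a1 ≤ 2*K1 * Real.exp (3*γ*τ) := by
    rw [ha1]
    apply mul_le_mul_of_nonneg_right _ hE3.le
    linarith [hεδ.2]
  have ha1pos : 0 < a1 := lt_of_lt_of_le (by positivity) ha1low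
  have hfeq : fbar k K1 γ B p g δ ε y τ = a1 * phik k y + ε * (a2 * g y + a3 * y ^ (-p)) := by
    simp only [fbar]
    rw [ha1, ha2, ha3]
  have hesplit : a3 = Real.exp ((p-2)*(γ*τ)) * Real.exp (3*γ*τ) := by
    rw [ha3, ← Real.exp_add]; ring_nf
  -- corrections
  have hb1 : |a2 * g y| ≤ m * (Real.exp (3*γ*τ) * y^(-2:ℤ)) + m * (Real.exp (3*γ*τ) * y^(2*(k:ℤ)-2)) := by
    rw [abs_mul, abs_of_pos ha2pos]
    calc a2 * |g y| ≤ a2 * (Cg * (y^(-5:ℤ) + y^(4*(k:ℤ)-7))) :=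
          mul_le_mul_of_nonneg_left hg0 ha2pos.le
      _ = (X * (Real.exp (3*γ*τ) * y^(-3:ℤ))) * (Real.exp (3*γ*τ) * y^(-2:ℤ))
          + (X * (Real.exp (3*γ*τ) * y^(2*(k:ℤ)-5))) * (Real.exp (3*γ*τ) * y^(2*(k:ℤ)-2)) := by
          rw [ha2, hX, hE6, zpow_split hy (show (-5:ℤ) = -3 + -2 by ring),
            zpow_split hy (show (4*(k:ℤ)-7) = (2*(k:ℤ)-5) + (2*(k:ℤ)-2) by ring)]
          ring
      _ ≤ m * (Real.exp (3*γ*τ) * y^(-2:ℤ)) + m * (Real.exp (3*γ*τ) * y^(2*(k:ℤ)-2)) :=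
          add_le_add (mul_le_mul_of_nonneg_right hKA (by positivity))
            (mul_le_mul_of_nonneg_right hKB (by positivity))
  have hb2 : a3 * y ^ (-p) ≤ m * (Real.exp (3*γ*τ) * y^(-2:ℤ)) := by
    have hysplit : y ^ (-p) = y ^ (2-p) * y ^ (-2:ℤ) := by
      rw [← Real.rpow_intCast y (-2), ← Real.rpow_add hy]
      congr 1; push_cast; ring
    calc a3 * y ^ (-p) = (Real.exp ((p-2)*(γ*τ)) * y ^ (2-p)) * (Real.exp (3*γ*τ) * y^(-2:ℤ)) := by
          rw [hesplit, hysplit]; ring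
      _ ≤ m * (Real.exp (3*γ*τ) * y^(-2:ℤ)) := mul_le_mul_of_nonneg_right hKC (by positivity)
  have hrppos : (0:ℝ) < y ^ (-p) := Real.rpow_pos_of_pos hy _
  have hcorr : |ε * (a2 * g y + a3 * y ^ (-p))|
      ≤ 2*m * (Real.exp (3*γ*τ) * y^(-2:ℤ)) + m * (Real.exp (3*γ*τ) * y^(2*(k:ℤ)-2)) := by
    rw [abs_mul, hε1, one_mul]
    calc |a2 * g y + a3 * y ^ (-p)| ≤ |a2 * g y| + |a3 * y ^ (-p)| := abs_add_le _ _
      _ = |a2 * g y| + a3 * y ^ (-p) := by rw [abs_of_pos (mul_pos ha3pos hrppos)]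
      _ ≤ 2*m * (Real.exp (3*γ*τ) * y^(-2:ℤ)) + m * (Real.exp (3*γ*τ) * y^(2*(k:ℤ)-2)) := by
          linarith [hb1, hb2]
  -- lower bound for fbar
  have hTA : (0:ℝ) < Real.exp (3*γ*τ) * y^(-2:ℤ) := by positivity
  have hTB : (0:ℝ) < Real.exp (3*γ*τ) * y^(2*(k:ℤ)-2) := by positivity
  have hflow : (K1/(4*Dk k)) * (Real.exp (3*γ*τ) * y^(-2:ℤ) + Real.exp (3*γ*τ) * y^(2*(k:ℤ)-2))
      ≤ fbar k K1 γ B p g δ ε y τ := by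
    rw [hfeq]
    have h1 : (K1/2 * Real.exp (3*γ*τ)) * ((1/Dk k) * (y^(-2:ℤ) + y^(2*(k:ℤ)-2))) ≤ a1 * phik k y :=
      mul_le_mul ha1low hphilow (by positivity) ha1pos.le
    have e1 : (K1/2 * Real.exp (3*γ*τ)) * ((1/Dk k) * (y^(-2:ℤ) + y^(2*(k:ℤ)-2)))
        = (K1/(4*Dk k)) * (Real.exp (3*γ*τ) * y^(-2:ℤ) + Real.exp (3*γ*τ) * y^(2*(k:ℤ)-2))
          + (K1/(4*Dk k)) * (Real.exp (3*γ*τ) * y^(-2:ℤ) + Real.exp (3*γ*τ) * y^(2*(k:ℤ)-2)) := by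
      field_simp; ring
    have hm2 : 2*m ≤ K1/(4*Dk k) := by
      have : K1/(8*Dk k) + K1/(8*Dk k) = K1/(4*Dk k) := by field_simp; ring
      linarith
    have hcorr2 := neg_abs_le (ε * (a2 * g y + a3 * y ^ (-p)))
    rw [e1] at h1
    have q1 : 0 ≤ (K1/(4*Dk k) - 2*m) * (Real.exp (3*γ*τ) * y^(-2:ℤ)) :=
      mul_nonneg (by linarith) hTA.le
    have q2 : 0 ≤ (K1/(4*Dk k) - m) * (Real.exp (3*γ*τ) * y^(2*(k:ℤ)-2)) :=
      mul_nonneg (by linarith [hmpos]) hTB.le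
    have hge : -(2*m * (Real.exp (3*γ*τ) * y^(-2:ℤ)) + m * (Real.exp (3*γ*τ) * y^(2*(k:ℤ)-2)))
        ≤ ε * (a2 * g y + a3 * y ^ (-p)) := by linarith [hcorr, hcorr2]
    linarith [h1, hge, q1, q2]
  -- |F|
  have hFabs : |fbar k K1 γ B p g δ ε y τ|
      ≤ C0 * (Real.exp (3*γ*τ) * y^(-2:ℤ) + Real.exp (3*γ*τ) * y^(2*(k:ℤ)-2)) := by
    rw [hfeq]
    have h1 : |a1 * phik k y| ≤ 2*K1*M * (Real.exp (3*γ*τ) * y^(-2:ℤ))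
        + 2*K1*M * (Real.exp (3*γ*τ) * y^(2*(k:ℤ)-2)) := by
      rw [abs_mul, abs_of_pos ha1pos, abs_of_nonneg hphinn]
      calc a1 * phik k y ≤ (2*K1*Real.exp (3*γ*τ)) * (M * (y^(-2:ℤ) + y^(2*(k:ℤ)-2))) :=
            mul_le_mul ha1up hphiup hphinn (by positivity)
        _ = 2*K1*M * (Real.exp (3*γ*τ) * y^(-2:ℤ)) + 2*K1*M * (Real.exp (3*γ*τ) * y^(2*(k:ℤ)-2)) := by
            ring
    have q1 : 0 ≤ (1 - 2*m) * (Real.exp (3*γ*τ) * y^(-2:ℤ)) :=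
      mul_nonneg (by linarith) hTA.le
    have q2 : 0 ≤ (1 - m) * (Real.exp (3*γ*τ) * y^(2*(k:ℤ)-2)) :=
      mul_nonneg (by linarith) hTB.le
    calc |a1 * phik k y + ε * (a2 * g y + a3 * y ^ (-p))|
        ≤ |a1 * phik k y| + |ε * (a2 * g y + a3 * y ^ (-p))| := abs_add_le _ _
      _ ≤ C0 * (Real.exp (3*γ*τ) * y^(-2:ℤ) + Real.exp (3*γ*τ) * y^(2*(k:ℤ)-2)) := by
          rw [hC0]; linarith [h1, hcorr, q1, q2]
  -- |F'|
  have hTA3 : (0:ℝ) < Real.exp (3*γ*τ) * y^(-3:ℤ) := by positivity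
  have hTB3 : (0:ℝ) < Real.exp (3*γ*τ) * y^(2*(k:ℤ)-3) := by positivity
  have hF1abs : |a1 * phi1 k y + ε * (a2 * deriv g y + a3 * (-p * y ^ (-p-1)))|
      ≤ C1 * (Real.exp (3*γ*τ) * y^(-3:ℤ) + Real.exp (3*γ*τ) * y^(2*(k:ℤ)-3)) := by
    have h1 : |a1 * phi1 k y| ≤ 2*K1*M * (Real.exp (3*γ*τ) * y^(-3:ℤ))
        + 2*K1*M * (Real.exp (3*γ*τ) * y^(2*(k:ℤ)-3)) := by
      rw [abs_mul, abs_of_pos ha1pos]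
      calc a1 * |phi1 k y| ≤ (2*K1*Real.exp (3*γ*τ)) * (M * (y^(-3:ℤ) + y^(2*(k:ℤ)-3))) :=
            mul_le_mul ha1up hphi1 (abs_nonneg _) (by positivity)
        _ = 2*K1*M * (Real.exp (3*γ*τ) * y^(-3:ℤ)) + 2*K1*M * (Real.exp (3*γ*τ) * y^(2*(k:ℤ)-3)) := by
            ring
    have h2 : |a2 * deriv g y| ≤ m * (Real.exp (3*γ*τ) * y^(-3:ℤ))
        + m * (Real.exp (3*γ*τ) * y^(2*(k:ℤ)-3)) := by
      rw [abs_mul, abs_of_pos ha2pos]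
      calc a2 * |deriv g y| ≤ a2 * (Cg * (y^(-6:ℤ) + y^(4*(k:ℤ)-8))) :=
            mul_le_mul_of_nonneg_left hg1 ha2pos.le
        _ = (X * (Real.exp (3*γ*τ) * y^(-3:ℤ))) * (Real.exp (3*γ*τ) * y^(-3:ℤ))
            + (X * (Real.exp (3*γ*τ) * y^(2*(k:ℤ)-5))) * (Real.exp (3*γ*τ) * y^(2*(k:ℤ)-3)) := by
            rw [ha2, hX, hE6, zpow_split hy (show (-6:ℤ) = -3 + -3 by ring),
              zpow_split hy (show (4*(k:ℤ)-8) = (2*(k:ℤ)-5) + (2*(k:ℤ)-3) by ring)]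
            ring
        _ ≤ m * (Real.exp (3*γ*τ) * y^(-3:ℤ)) + m * (Real.exp (3*γ*τ) * y^(2*(k:ℤ)-3)) :=
            add_le_add (mul_le_mul_of_nonneg_right hKA (by positivity))
              (mul_le_mul_of_nonneg_right hKB (by positivity))
    have h3 : |a3 * (-p * y ^ (-p-1))| ≤ 1 * (Real.exp (3*γ*τ) * y^(-3:ℤ)) := by
      have hyp1 : y ^ (-p-1) = y ^ (2-p) * y^(-3:ℤ) := by
        rw [← Real.rpow_intCast y (-3), ← Real.rpow_add hy]
        congr 1; push_cast; ring
      have hrp1 : (0:ℝ) < y ^ (-p-1) := Real.rpow_pos_of_pos hy _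
      have e : |a3 * (-p * y ^ (-p-1))| = p * (a3 * y ^ (-p-1)) := by
        rw [abs_mul, abs_of_pos ha3pos, abs_mul, abs_neg,
          abs_of_pos (by linarith : (0:ℝ) < p), abs_of_pos hrp1]
        ring
      rw [e, hyp1]
      have step : p * (a3 * (y ^ (2-p) * y^(-3:ℤ)))
          = p * ((Real.exp ((p-2)*(γ*τ)) * y ^ (2-p)) * (Real.exp (3*γ*τ) * y^(-3:ℤ))) := by
        rw [hesplit]; ring
      rw [step]
      have hq := mul_le_mul_of_nonneg_right hKC hTA3.le
      have h3m : 0 ≤ (1 - 3*m) * (Real.exp (3*γ*τ) * y^(-3:ℤ)) :=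
        mul_nonneg (by linarith) hTA3.le
      have hWnn : 0 ≤ (Real.exp ((p-2)*(γ*τ)) * y ^ (2-p)) * (Real.exp (3*γ*τ) * y^(-3:ℤ)) :=
        mul_nonneg (mul_nonneg (Real.exp_pos _).le (Real.rpow_pos_of_pos hy _).le) hTA3.le
      have s1 : p * ((Real.exp ((p-2)*(γ*τ)) * y ^ (2-p)) * (Real.exp (3*γ*τ) * y^(-3:ℤ)))
          ≤ 3 * ((Real.exp ((p-2)*(γ*τ)) * y ^ (2-p)) * (Real.exp (3*γ*τ) * y^(-3:ℤ))) :=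
        mul_le_mul_of_nonneg_right (by linarith) hWnn
      have s2 := mul_le_mul_of_nonneg_left hq (by norm_num : (0:ℝ) ≤ 3)
      linarith [h3m, s1, s2]
    have q1 : 0 ≤ (1 - m) * (Real.exp (3*γ*τ) * y^(-3:ℤ)) := mul_nonneg (by linarith) hTA3.le
    have q2 : 0 ≤ (2 - m) * (Real.exp (3*γ*τ) * y^(2*(k:ℤ)-3)) := mul_nonneg (by linarith) hTB3.le
    calc |a1 * phi1 k y + ε * (a2 * deriv g y + a3 * (-p * y ^ (-p-1)))|
        ≤ |a1 * phi1 k y| + |ε * (a2 * deriv g y + a3 * (-p * y ^ (-p-1)))| := abs_add_le _ _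
      _ = |a1 * phi1 k y| + |a2 * deriv g y + a3 * (-p * y ^ (-p-1))| := by
          rw [abs_mul ε, hε1, one_mul]
      _ ≤ |a1 * phi1 k y| + (|a2 * deriv g y| + |a3 * (-p * y ^ (-p-1))|) := by
          linarith [abs_add_le (a2 * deriv g y) (a3 * (-p * y ^ (-p-1)))]
      _ ≤ C1 * (Real.exp (3*γ*τ) * y^(-3:ℤ) + Real.exp (3*γ*τ) * y^(2*(k:ℤ)-3)) := by
          rw [hC1]; linarith [h1, h2, h3, q1, q2]
  -- |F''|
  have hTA4 : (0:ℝ) < Real.exp (3*γ*τ) * y^(-4:ℤ) := by positivity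
  have hTB4 : (0:ℝ) < Real.exp (3*γ*τ) * y^(2*(k:ℤ)-4) := by positivity
  have hF2abs : |a1 * phi2 k y + ε * (a2 * deriv (deriv g) y + a3 * (-p * ((-p-1) * y ^ (-p-2))))|
      ≤ C2 * (Real.exp (3*γ*τ) * y^(-4:ℤ) + Real.exp (3*γ*τ) * y^(2*(k:ℤ)-4)) := by
    have h1 : |a1 * phi2 k y| ≤ 2*K1*M * (Real.exp (3*γ*τ) * y^(-4:ℤ))
        + 2*K1*M * (Real.exp (3*γ*τ) * y^(2*(k:ℤ)-4)) := by
      rw [abs_mul, abs_of_pos ha1pos]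
      calc a1 * |phi2 k y| ≤ (2*K1*Real.exp (3*γ*τ)) * (M * (y^(-4:ℤ) + y^(2*(k:ℤ)-4))) :=
            mul_le_mul ha1up hphi2 (abs_nonneg _) (by positivity)
        _ = 2*K1*M * (Real.exp (3*γ*τ) * y^(-4:ℤ)) + 2*K1*M * (Real.exp (3*γ*τ) * y^(2*(k:ℤ)-4)) := by
            ring
    have h2 : |a2 * deriv (deriv g) y| ≤ m * (Real.exp (3*γ*τ) * y^(-4:ℤ))
        + m * (Real.exp (3*γ*τ) * y^(2*(k:ℤ)-4)) := by
      rw [abs_mul, abs_of_pos ha2pos]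
      calc a2 * |deriv (deriv g) y| ≤ a2 * (Cg * (y^(-7:ℤ) + y^(4*(k:ℤ)-9))) :=
            mul_le_mul_of_nonneg_left hg2 ha2pos.le
        _ = (X * (Real.exp (3*γ*τ) * y^(-3:ℤ))) * (Real.exp (3*γ*τ) * y^(-4:ℤ))
            + (X * (Real.exp (3*γ*τ) * y^(2*(k:ℤ)-5))) * (Real.exp (3*γ*τ) * y^(2*(k:ℤ)-4)) := by
            rw [ha2, hX, hE6, zpow_split hy (show (-7:ℤ) = -3 + -4 by ring),
              zpow_split hy (show (4*(k:ℤ)-9) = (2*(k:ℤ)-5) + (2*(k:ℤ)-4) by ring)]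
            ring
        _ ≤ m * (Real.exp (3*γ*τ) * y^(-4:ℤ)) + m * (Real.exp (3*γ*τ) * y^(2*(k:ℤ)-4)) :=
            add_le_add (mul_le_mul_of_nonneg_right hKA (by positivity))
              (mul_le_mul_of_nonneg_right hKB (by positivity))
    have h3 : |a3 * (-p * ((-p-1) * y ^ (-p-2)))| ≤ 4 * (Real.exp (3*γ*τ) * y^(-4:ℤ)) := by
      have hyp2 : y ^ (-p-2) = y ^ (2-p) * y^(-4:ℤ) := by
        rw [← Real.rpow_intCast y (-4), ← Real.rpow_add hy]
        congr 1; push_cast; ring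
      have hrp2 : (0:ℝ) < y ^ (-p-2) := Real.rpow_pos_of_pos hy _
      have e : |a3 * (-p * ((-p-1) * y ^ (-p-2)))| = (p*(p+1)) * (a3 * y ^ (-p-2)) := by
        rw [abs_mul, abs_of_pos ha3pos, abs_mul, abs_neg,
          abs_of_pos (by linarith : (0:ℝ) < p), abs_mul, abs_of_pos hrp2,
          abs_of_neg (by linarith : (-p-1:ℝ) < 0)]
        ring
      rw [e, hyp2]
      have step : (p*(p+1)) * (a3 * (y ^ (2-p) * y^(-4:ℤ)))
          = (p*(p+1)) * ((Real.exp ((p-2)*(γ*τ)) * y ^ (2-p)) * (Real.exp (3*γ*τ) * y^(-4:ℤ))) := by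
        rw [hesplit]; ring
      rw [step]
      have hq := mul_le_mul_of_nonneg_right hKC hTA4.le
      have h12m : 0 ≤ (4 - 12*m) * (Real.exp (3*γ*τ) * y^(-4:ℤ)) :=
        mul_nonneg (by linarith) hTA4.le
      have hWnn : 0 ≤ (Real.exp ((p-2)*(γ*τ)) * y ^ (2-p)) * (Real.exp (3*γ*τ) * y^(-4:ℤ)) :=
        mul_nonneg (mul_nonneg (Real.exp_pos _).le (Real.rpow_pos_of_pos hy _).le) hTA4.le
      have hpp : p*(p+1) ≤ 12 := by
        have := mul_le_mul hp3.le (by linarith : p+1 ≤ 4) (by linarith : (0:ℝ) ≤ p+1)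
          (by norm_num : (0:ℝ) ≤ 3)
        linarith
      have s1 : (p*(p+1)) * ((Real.exp ((p-2)*(γ*τ)) * y ^ (2-p)) * (Real.exp (3*γ*τ) * y^(-4:ℤ)))
          ≤ 12 * ((Real.exp ((p-2)*(γ*τ)) * y ^ (2-p)) * (Real.exp (3*γ*τ) * y^(-4:ℤ))) :=
        mul_le_mul_of_nonneg_right hpp hWnn
      have s2 := mul_le_mul_of_nonneg_left hq (by norm_num : (0:ℝ) ≤ 12)
      linarith [h12m, s1, s2]
    have q1 : 0 ≤ (1 - m) * (Real.exp (3*γ*τ) * y^(-4:ℤ)) := mul_nonneg (by linarith) hTA4.le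
    have q2 : 0 ≤ (5 - m) * (Real.exp (3*γ*τ) * y^(2*(k:ℤ)-4)) := mul_nonneg (by linarith) hTB4.le
    calc |a1 * phi2 k y + ε * (a2 * deriv (deriv g) y + a3 * (-p * ((-p-1) * y ^ (-p-2))))|
        ≤ |a1 * phi2 k y| + |ε * (a2 * deriv (deriv g) y + a3 * (-p * ((-p-1) * y ^ (-p-2))))| :=
          abs_add_le _ _
      _ = |a1 * phi2 k y| + |a2 * deriv (deriv g) y + a3 * (-p * ((-p-1) * y ^ (-p-2)))| := by
          rw [abs_mul ε, hε1, one_mul]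
      _ ≤ |a1 * phi2 k y| + (|a2 * deriv (deriv g) y| + |a3 * (-p * ((-p-1) * y ^ (-p-2)))|) := by
          linarith [abs_add_le (a2 * deriv (deriv g) y) (a3 * (-p * ((-p-1) * y ^ (-p-2))))]
      _ ≤ C2 * (Real.exp (3*γ*τ) * y^(-4:ℤ) + Real.exp (3*γ*τ) * y^(2*(k:ℤ)-4)) := by
          rw [hC2]; linarith [h1, h2, h3, q1, q2]
  -- conclusion
  have hF0pos : 0 < fbar k K1 γ B p g δ ε y τ :=
    lt_of_lt_of_le (mul_pos (div_pos hK1pos (by positivity)) (add_pos hTA hTB)) hflow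
  obtain ⟨F0, hF0⟩ : ∃ F0, F0 = fbar k K1 γ B p g δ ε y τ := ⟨_, rfl⟩
  obtain ⟨d1, hd1n⟩ : ∃ d, d = a1 * phi1 k y + ε * (a2 * deriv g y + a3 * (-p * y ^ (-p-1))) :=
    ⟨_, rfl⟩
  obtain ⟨d2, hd2n⟩ : ∃ d, d = a1 * phi2 k y + ε * (a2 * deriv (deriv g) y
      + a3 * (-p * ((-p-1) * y ^ (-p-2)))) := ⟨_, rfl⟩
  rw [← hF0] at hF0pos hFabs
  rw [← hd1n] at hd1 hF1abs
  rw [← hd2n] at hF2abs hd2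
  have hNeq : Nop (fun z => fbar k K1 γ B p g δ ε z τ) y
      = -3 * F0^2 / (y^2 * (y + F0))
        - ((2 + d1) / (1 + (1 + d1)^2)) * d1 * d2 := by
    simp only [Nop]
    rw [hd1, hd2, ← hF0]
  refine ⟨hF0 ▸ hF0pos, ?_⟩
  -- term 1
  have hE6pos : (0:ℝ) < Real.exp (6*γ*τ) := Real.exp_pos _
  have hu7 : (0:ℝ) < Real.exp (6*γ*τ) * y^(-7:ℤ) := by positivity
  have hv7 : (0:ℝ) < Real.exp (6*γ*τ) * y^(4*(k:ℤ)-7) := by positivity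
  have ht1 : |(-3) * F0^2 / (y^2 * (y + F0))|
      ≤ 12*C0^2 * (Real.exp (6*γ*τ) * y^(-7:ℤ) + Real.exp (6*γ*τ) * y^(4*(k:ℤ)-7)) := by
    have hyF : 0 < y + F0 := by linarith
    have hden : 0 < y^2 * (y + F0) := mul_pos (by positivity) hyF
    have hden2 : y^3 ≤ y^2 * (y + F0) := by
      have h0 : y ≤ y + F0 := by linarith
      calc y^3 = y^2 * y := by ring
        _ ≤ y^2 * (y + F0) := mul_le_mul_of_nonneg_left h0 (by positivity)
    rw [abs_div, abs_of_pos hden]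
    have hnum : |(-3) * F0^2| = 3*F0^2 := by
      rw [abs_mul, abs_of_nonneg (sq_nonneg F0)]; norm_num
    rw [hnum]
    have s1 : 3*F0^2 / (y^2*(y+F0)) ≤ 3*F0^2 / y^3 :=
      div_le_div_of_nonneg_left (by positivity) (by positivity) hden2
    have s2 : 3*F0^2 / y^3 ≤ 12*C0^2 * (Real.exp (6*γ*τ) * y^(-7:ℤ) + Real.exp (6*γ*τ) * y^(4*(k:ℤ)-7)) := by
      rw [div_le_iff₀ (by positivity : (0:ℝ) < y^3)]
      have hsq : F0^2 ≤ (C0 * (Real.exp (3*γ*τ) * y^(-2:ℤ) + Real.exp (3*γ*τ) * y^(2*(k:ℤ)-2)))^2 := by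
        rw [← sq_abs F0]
        exact pow_le_pow_left₀ (abs_nonneg _) hFabs 2
      have hexp2 : (C0 * (Real.exp (3*γ*τ) * y^(-2:ℤ) + Real.exp (3*γ*τ) * y^(2*(k:ℤ)-2)))^2
          = C0^2 * (Real.exp (6*γ*τ) * y^(-4:ℤ)) + 2*C0^2 * (Real.exp (6*γ*τ) * y^(2*(k:ℤ)-4))
            + C0^2 * (Real.exp (6*γ*τ) * y^(4*(k:ℤ)-4)) := by
        rw [hE6, zpow_split hy (show (-4:ℤ) = -2 + -2 by ring),
          zpow_split hy (show (2*(k:ℤ)-4) = -2 + (2*(k:ℤ)-2) by ring),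
          zpow_split hy (show (4*(k:ℤ)-4) = (2*(k:ℤ)-2) + (2*(k:ℤ)-2) by ring)]
        ring
      have hsand : y^(2*(k:ℤ)-4) ≤ y^(-4:ℤ) + y^(4*(k:ℤ)-4) :=
        zpow_sandwich hy (by omega) (by omega)
      have hsand' : Real.exp (6*γ*τ) * y^(2*(k:ℤ)-4)
          ≤ Real.exp (6*γ*τ) * y^(-4:ℤ) + Real.exp (6*γ*τ) * y^(4*(k:ℤ)-4) := by
        have := mul_le_mul_of_nonneg_left hsand hE6pos.le
        rw [mul_add] at this
        exact this
      have e73 : y^(-7:ℤ) * y^(3:ℕ) = y^(-4:ℤ) := by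
        rw [← zpow_natCast y 3, ← zpow_add₀ hy.ne']; norm_num
      have e74 : y^(4*(k:ℤ)-7) * y^(3:ℕ) = y^(4*(k:ℤ)-4) := by
        rw [← zpow_natCast y 3, ← zpow_add₀ hy.ne']
        congr 1; omega
      have hRHS : 12*C0^2 * (Real.exp (6*γ*τ) * y^(-7:ℤ) + Real.exp (6*γ*τ) * y^(4*(k:ℤ)-7)) * y^3
          = 12*C0^2 * (Real.exp (6*γ*τ) * y^(-4:ℤ)) + 12*C0^2 * (Real.exp (6*γ*τ) * y^(4*(k:ℤ)-4)) := by
        calc 12*C0^2 * (Real.exp (6*γ*τ) * y^(-7:ℤ) + Real.exp (6*γ*τ) * y^(4*(k:ℤ)-7)) * y^3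
            = 12*C0^2 * (Real.exp (6*γ*τ) * (y^(-7:ℤ) * y^(3:ℕ)))
              + 12*C0^2 * (Real.exp (6*γ*τ) * (y^(4*(k:ℤ)-7) * y^(3:ℕ))) := by ring
          _ = _ := by rw [e73, e74]
      rw [hRHS]
      have hq1 : 0 ≤ C0^2 * (Real.exp (6*γ*τ) * y^(-4:ℤ)) := by positivity
      have hq2 : 0 ≤ C0^2 * (Real.exp (6*γ*τ) * y^(4*(k:ℤ)-4)) := by positivity
      have hq3 : 0 ≤ C0^2 := sq_nonneg C0
      have hs := mul_le_mul_of_nonneg_left hsand' (by positivity : (0:ℝ) ≤ 6*C0^2)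
      have hsq2 := hexp2 ▸ hsq
      linarith [hsq2, hs, hq1, hq2]
    exact s1.trans s2
  -- term 2
  have ht2 : |((2 + d1) / (1 + (1 + d1)^2)) * d1 * d2|
      ≤ 6*C1*C2 * (Real.exp (6*γ*τ) * y^(-7:ℤ) + Real.exp (6*γ*τ) * y^(4*(k:ℤ)-7)) := by
    have hQ := Qbd d1
    have hA1nn : (0:ℝ) ≤ Real.exp (3*γ*τ) * y^(-3:ℤ) + Real.exp (3*γ*τ) * y^(2*(k:ℤ)-3) := by
      positivity
    have hA2nn : (0:ℝ) ≤ Real.exp (3*γ*τ) * y^(-4:ℤ) + Real.exp (3*γ*τ) * y^(2*(k:ℤ)-4) := by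
      positivity
    have e1 : (Real.exp (3*γ*τ) * y^(-3:ℤ)) * (Real.exp (3*γ*τ) * y^(-4:ℤ))
        = Real.exp (6*γ*τ) * y^(-7:ℤ) := by
      rw [hE6, zpow_split hy (show (-7:ℤ) = -3 + -4 by ring)]; ring
    have e2 : (Real.exp (3*γ*τ) * y^(-3:ℤ)) * (Real.exp (3*γ*τ) * y^(2*(k:ℤ)-4))
        = Real.exp (6*γ*τ) * y^(2*(k:ℤ)-7) := by
      rw [hE6, zpow_split hy (show (2*(k:ℤ)-7) = -3 + (2*(k:ℤ)-4) by ring)]; ring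
    have e3 : (Real.exp (3*γ*τ) * y^(2*(k:ℤ)-3)) * (Real.exp (3*γ*τ) * y^(-4:ℤ))
        = Real.exp (6*γ*τ) * y^(2*(k:ℤ)-7) := by
      rw [hE6, zpow_split hy (show (2*(k:ℤ)-7) = (2*(k:ℤ)-3) + -4 by ring)]; ring
    have e4 : (Real.exp (3*γ*τ) * y^(2*(k:ℤ)-3)) * (Real.exp (3*γ*τ) * y^(2*(k:ℤ)-4))
        = Real.exp (6*γ*τ) * y^(4*(k:ℤ)-7) := by
      rw [hE6, zpow_split hy (show (4*(k:ℤ)-7) = (2*(k:ℤ)-3) + (2*(k:ℤ)-4) by ring)]; ring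
    have hsand2 : y^(2*(k:ℤ)-7) ≤ y^(-7:ℤ) + y^(4*(k:ℤ)-7) :=
      zpow_sandwich hy (by omega) (by omega)
    have hsand2' : Real.exp (6*γ*τ) * y^(2*(k:ℤ)-7)
        ≤ Real.exp (6*γ*τ) * y^(-7:ℤ) + Real.exp (6*γ*τ) * y^(4*(k:ℤ)-7) := by
      have := mul_le_mul_of_nonneg_left hsand2 hE6pos.le
      rw [mul_add] at this
      exact this
    have hAA : (Real.exp (3*γ*τ) * y^(-3:ℤ) + Real.exp (3*γ*τ) * y^(2*(k:ℤ)-3))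
          * (Real.exp (3*γ*τ) * y^(-4:ℤ) + Real.exp (3*γ*τ) * y^(2*(k:ℤ)-4))
        ≤ 3 * (Real.exp (6*γ*τ) * y^(-7:ℤ) + Real.exp (6*γ*τ) * y^(4*(k:ℤ)-7)) := by
      have expand : (Real.exp (3*γ*τ) * y^(-3:ℤ) + Real.exp (3*γ*τ) * y^(2*(k:ℤ)-3))
            * (Real.exp (3*γ*τ) * y^(-4:ℤ) + Real.exp (3*γ*τ) * y^(2*(k:ℤ)-4))
          = (Real.exp (3*γ*τ) * y^(-3:ℤ)) * (Real.exp (3*γ*τ) * y^(-4:ℤ))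
            + (Real.exp (3*γ*τ) * y^(-3:ℤ)) * (Real.exp (3*γ*τ) * y^(2*(k:ℤ)-4))
            + (Real.exp (3*γ*τ) * y^(2*(k:ℤ)-3)) * (Real.exp (3*γ*τ) * y^(-4:ℤ))
            + (Real.exp (3*γ*τ) * y^(2*(k:ℤ)-3)) * (Real.exp (3*γ*τ) * y^(2*(k:ℤ)-4)) := by
        ring
      rw [expand, e1, e2, e3, e4]
      linarith [hsand2', hu7, hv7]
    have hd1d2 : |d1| * |d2| ≤ (C1*C2) * (3 * (Real.exp (6*γ*τ) * y^(-7:ℤ) + Real.exp (6*γ*τ) * y^(4*(k:ℤ)-7))) := by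
      calc |d1| * |d2| ≤ (C1 * (Real.exp (3*γ*τ) * y^(-3:ℤ) + Real.exp (3*γ*τ) * y^(2*(k:ℤ)-3)))
            * (C2 * (Real.exp (3*γ*τ) * y^(-4:ℤ) + Real.exp (3*γ*τ) * y^(2*(k:ℤ)-4))) :=
            mul_le_mul hF1abs hF2abs (abs_nonneg _) (mul_nonneg hC1p.le hA1nn)
        _ = (C1*C2) * ((Real.exp (3*γ*τ) * y^(-3:ℤ) + Real.exp (3*γ*τ) * y^(2*(k:ℤ)-3))
            * (Real.exp (3*γ*τ) * y^(-4:ℤ) + Real.exp (3*γ*τ) * y^(2*(k:ℤ)-4))) := by ring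
        _ ≤ (C1*C2) * (3 * (Real.exp (6*γ*τ) * y^(-7:ℤ) + Real.exp (6*γ*τ) * y^(4*(k:ℤ)-7))) :=
            mul_le_mul_of_nonneg_left hAA (mul_nonneg hC1p.le hC2p.le)
    calc |((2 + d1) / (1 + (1 + d1)^2)) * d1 * d2|
        = |(2 + d1) / (1 + (1 + d1)^2)| * |d1| * |d2| := by rw [abs_mul, abs_mul]
      _ ≤ (3/2) * (|d1| * |d2|) := by
          have h := mul_le_mul_of_nonneg_right hQ (abs_nonneg d1)
          have h' := mul_le_mul_of_nonneg_right h (abs_nonneg d2)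
          calc |(2 + d1) / (1 + (1 + d1)^2)| * |d1| * |d2| ≤ 3/2 * |d1| * |d2| := h'
            _ = (3/2) * (|d1| * |d2|) := by ring
      _ ≤ (3/2) * ((C1*C2) * (3 * (Real.exp (6*γ*τ) * y^(-7:ℤ) + Real.exp (6*γ*τ) * y^(4*(k:ℤ)-7)))) :=
          mul_le_mul_of_nonneg_left hd1d2 (by norm_num)
      _ = (9/2) * ((C1*C2) * (Real.exp (6*γ*τ) * y^(-7:ℤ) + Real.exp (6*γ*τ) * y^(4*(k:ℤ)-7))) := by
          ring
      _ ≤ 6 * ((C1*C2) * (Real.exp (6*γ*τ) * y^(-7:ℤ) + Real.exp (6*γ*τ) * y^(4*(k:ℤ)-7))) :=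
          mul_le_mul_of_nonneg_right (by norm_num)
            (mul_nonneg (mul_nonneg hC1p.le hC2p.le) (by positivity))
      _ = 6*C1*C2 * (Real.exp (6*γ*τ) * y^(-7:ℤ) + Real.exp (6*γ*τ) * y^(4*(k:ℤ)-7)) := by ring
  -- finish
  have hnat : y^(4*k-7) = y^(4*(k:ℤ)-7) := by
    rw [← zpow_natCast y (4*k-7)]
    congr 1
    omega
  rw [hnat, hNeq]
  calc |(-3) * F0^2 / (y^2 * (y + F0)) - ((2 + d1) / (1 + (1 + d1)^2)) * d1 * d2|
      ≤ |(-3) * F0^2 / (y^2 * (y + F0))| + |((2 + d1) / (1 + (1 + d1)^2)) * d1 * d2| :=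
        abs_sub _ _
    _ ≤ 12*C0^2 * (Real.exp (6*γ*τ) * y^(-7:ℤ) + Real.exp (6*γ*τ) * y^(4*(k:ℤ)-7))
        + 6*C1*C2 * (Real.exp (6*γ*τ) * y^(-7:ℤ) + Real.exp (6*γ*τ) * y^(4*(k:ℤ)-7)) :=
        add_le_add ht1 ht2
    _ = (12*C0^2 + 6*C1*C2) * Real.exp (6*γ*τ) * (y^(-7:ℤ) + y^(4*(k:ℤ)-7)) := by ring
end

section
/- Let k ≥ 4 be an integer and γ = k/3 − 1/2. Let W : [0,∞) → (0,∞) be a smooth nondecreasing solution of the Alencar equation on (0,∞) such that there exist constants C₂, C₃ > 0 with W(z) ≤ C₂·(1+z) and 0 < W(z) − z·W'(z) ≤ C₃/(1+z)² for all z ≥ 0. Then there exist ζ > 0 and D* > 0 such that for every D ≥ D* there is τ* ∈ ℝ with the following property: the function w(z,τ) = W(z) + D·e^{2γτ} satisfies, for all τ ≤ τ* and all 0 < z ≤ ζ·e^{−γτ}, the strict subsolution inequality W''(z)/(1+W'(z)²) + (3/z)·W'(z) − 3/w(z,τ) > e^{2γτ}·(2γ·D·e^{2γτ} + (k/3)·(w(z,τ)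 − z·W'(z))). -/
open Filter Set

private lemma aux1 (A x D : ℝ) (hA : 0 < A) (hD : x / A + 1 ≤ D) : x < A * D := by
  have h2 : A * (x / A) = x := by field_simp
  nlinarith [mul_le_mul_of_nonneg_left hD hA.le]

private lemma aux2 (a z ζ b : ℝ) (ha : 0 < a) (h1 : z ≤ ζ * b) (h2 : a * b = 1) :
    a * z ≤ ζ := by
  have h3 : a * (ζ * b) = ζ := by
    calc a * (ζ * b) = ζ * (a * b) := by ring
      _ = ζ := by rw [h2, mul_one]
  have h4 := mul_le_mul_of_nonneg_left h1 ha.le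
  linarith only [h3, h4]

private lemma aux3 (x ζ : ℝ) (hx : 0 ≤ x) (h : x ≤ 2 * ζ) : x ^ 2 ≤ 4 * ζ ^ 2 := by
  nlinarith

private lemma aux4 (B t ζ A : ℝ) (hB : 0 < B) (hζ : 0 < ζ) (ht : t ≤ 4 * ζ ^ 2)
    (hA : ζ ^ 2 * (16 * B + 1) = A) : B * t < A / 2 := by
  nlinarith [mul_pos hB (pow_pos hζ 2), pow_pos hζ 2, mul_le_mul_of_nonneg_left ht hB.le]

private lemma aux5 (C2 u e z : ℝ) (hC2 : 0 < C2) (hz : 0 < z) (hu : 0 < u)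
    (he : 0 < e) (he1 : e ≤ 1) (hub : u ≤ C2 * (1 + z)) :
    u * (u + e) ≤ C2 * (C2 + 1) * (1 + z) ^ 2 := by
  have h1 : u + e ≤ (C2 + 1) * (1 + z) := by nlinarith
  have h2 : u * (u + e) ≤ (C2 * (1 + z)) * ((C2 + 1) * (1 + z)) :=
    mul_le_mul hub h1 (by linarith) (by positivity)
  nlinarith [h2]

private lemma aux6 (e d : ℝ) (he : 0 < e) (hd : 1 ≤ d) (hde : d * e ≤ 1) : e ≤ 1 := by
  nlinarith [mul_nonneg he.le (sub_nonneg.mpr hd)]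

/-- Lower barrier in the inner region: `w(z,τ) = W(z) + D e^{2γτ}` is a strict subsolution
of the rescaled inner equation for `0 < z ≤ ζ e^{-γτ}`, `τ ≤ τ*`. -/
theorem stmt_10
    (k : ℕ) (hk : 4 ≤ k) (γ : ℝ) (hγ : γ = (k : ℝ) / 3 - 1 / 2)
    (W : ℝ → ℝ)
    (hW : ContDiffOn ℝ (⊤ : ℕ∞) W (Set.Ici 0))
    (hWpos : ∀ z ≥ (0:ℝ), 0 < W z)
    (hmono : MonotoneOn W (Set.Ici 0))
    (hAlencar : ∀ z > (0:ℝ),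
      deriv (deriv W) z / (1 + (deriv W z) ^ 2) + (3 / z) * deriv W z - 3 / W z = 0)
    (C2 C3 : ℝ) (hC2 : 0 < C2) (hC3 : 0 < C3)
    (hWbd : ∀ z ≥ (0:ℝ), W z ≤ C2 * (1 + z))
    (hstar : ∀ z ≥ (0:ℝ),
      0 < W z - z * deriv W z ∧ W z - z * deriv W z ≤ C3 / (1 + z) ^ 2) :
    ∃ ζ > (0:ℝ), ∃ Dstar > (0:ℝ), ∀ D ≥ Dstar, ∃ τstar : ℝ,
      ∀ τ ≤ τstar, ∀ z : ℝ, 0 < z → z ≤ ζ * Real.exp (-(γ * τ)) →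
        deriv (deriv W) z / (1 + (deriv W z) ^ 2) + (3 / z) * deriv W z
            - 3 / (W z + D * Real.exp (2 * γ * τ))
          > Real.exp (2 * γ * τ) * (2 * γ * D * Real.exp (2 * γ * τ)
              + ((k : ℝ) / 3) * (W z + D * Real.exp (2 * γ * τ) - z * deriv W z)) := by
  have hk4 : (4:ℝ) ≤ (k:ℝ) := by exact_mod_cast hk
  have hγpos : 0 < γ := by rw [hγ]; linarith
  set A : ℝ := 3 / (C2 * (C2 + 1)) with hA
  have hApos : 0 < A := by positivity
  set B : ℝ := 2 * γ + (k:ℝ) / 3 with hB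
  have hBpos : 0 < B := by positivity
  set ζ : ℝ := Real.sqrt (A / (16 * B + 1)) with hζ
  have hζpos : 0 < ζ := Real.sqrt_pos.mpr (by positivity)
  have hζsq : ζ ^ 2 = A / (16 * B + 1) := Real.sq_sqrt (by positivity)
  have hζsq' : ζ ^ 2 * (16 * B + 1) = A := by
    rw [hζsq]; field_simp
  set Dstar : ℝ := 2 * ((k:ℝ) / 3) * C3 / A + 1 with hDstar
  have hDstarpos : 0 < Dstar := by positivity
  clear_value A B ζ Dstar
  clear hζ
  refine ⟨ζ, hζpos, Dstar, hDstarpos, ?_⟩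
  intro D hD
  have hD1 : 1 ≤ D := by
    have h1 : 1 ≤ Dstar := by rw [hDstar]; exact le_add_of_nonneg_left (by positivity)
    linarith only [h1, hD]
  have hDpos : 0 < D := lt_of_lt_of_le one_pos hD1
  have hAD : 2 * ((k:ℝ) / 3) * C3 < A * D := by
    refine aux1 A _ D hApos ?_
    rw [hDstar] at hD; exact hD
  refine ⟨min (Real.log (1 / D) / (2 * γ)) (Real.log ζ / γ), ?_⟩
  intro τ hτ z hz hzζ
  set E : ℝ := Real.exp (2 * γ * τ) with hE
  clear_value E
  have hEpos : 0 < E := by rw [hE]; exact Real.exp_pos _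
  have hepos : 0 < Real.exp (γ * τ) := Real.exp_pos _
  have hτ1 : τ ≤ Real.log (1 / D) / (2 * γ) := le_trans hτ (min_le_left _ _)
  have hτ2 : τ ≤ Real.log ζ / γ := le_trans hτ (min_le_right _ _)
  have hDE1 : D * E ≤ 1 := by
    have h1 : 2 * γ * τ ≤ Real.log (1 / D) := by
      have h := (le_div_iff₀ (by positivity : (0:ℝ) < 2 * γ)).mp hτ1
      linarith only [h]
    have h2 : E ≤ 1 / D := by
      rw [hE]
      calc Real.exp (2 * γ * τ) ≤ Real.exp (Real.log (1 / D)) := Real.exp_le_exp.mpr h1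
        _ = 1 / D := Real.exp_log (by positivity)
    calc D * E ≤ D * (1 / D) := mul_le_mul_of_nonneg_left h2 hDpos.le
      _ = 1 := by field_simp
  have hE1 : E ≤ 1 := aux6 E D hEpos hD1 hDE1
  have heζ : Real.exp (γ * τ) ≤ ζ := by
    have h1 : γ * τ ≤ Real.log ζ := by
      have h := (le_div_iff₀ hγpos).mp hτ2
      linarith only [h]
    calc Real.exp (γ * τ) ≤ Real.exp (Real.log ζ) := Real.exp_le_exp.mpr h1
      _ = ζ := Real.exp_log hζpos
  have hEsq : E = Real.exp (γ * τ) ^ 2 := by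
    rw [hE, pow_two, ← Real.exp_add]; congr 1; ring
  have hez : Real.exp (γ * τ) * z ≤ ζ := by
    refine aux2 _ z ζ (Real.exp (-(γ * τ))) hepos hzζ ?_
    rw [← Real.exp_add]
    simp
  set Q : ℝ := (1 + z) ^ 2 with hQ
  clear_value Q
  have hQpos : 0 < Q := by rw [hQ]; positivity
  have hEQ : E * Q ≤ 4 * ζ ^ 2 := by
    have h1 : Real.exp (γ * τ) * (1 + z) ≤ 2 * ζ := by
      have := mul_le_mul_of_nonneg_left (le_of_lt hz) hepos.le
      linarith only [heζ, hez]
    have h2 : E * Q = (Real.exp (γ * τ) * (1 + z)) ^ 2 := by rw [hEsq, hQ]; ring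
    rw [h2]
    exact aux3 _ ζ (by positivity) h1
  have hBEQ : B * (E * Q) < A / 2 := aux4 B (E * Q) ζ A hBpos hζpos hEQ hζsq'
  have hu : 0 < W z := hWpos z hz.le
  have hub : W z ≤ C2 * (1 + z) := hWbd z hz.le
  obtain ⟨hsp1, hsp2⟩ := hstar z hz.le
  rw [← hQ] at hsp2
  have halg : deriv (deriv W) z / (1 + (deriv W z) ^ 2) + (3 / z) * deriv W z
      - 3 / (W z + D * E) = 3 / W z - 3 / (W z + D * E) := by
    have h := hAlencar z hz
    linarith only [h]
  rw [halg]
  have hDEpos : 0 < D * E := mul_pos hDpos hEpos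
  have huε : 0 < W z + D * E := by linarith only [hu, hDEpos]
  have hdiff : 3 / W z - 3 / (W z + D * E) = 3 * (D * E) / (W z * (W z + D * E)) := by
    rw [div_sub_div _ _ (ne_of_gt hu) (ne_of_gt huε)]
    congr 1
    ring
  rw [hdiff]
  have hden : W z * (W z + D * E) ≤ C2 * (C2 + 1) * Q := by
    rw [hQ]
    exact aux5 C2 (W z) (D * E) z hC2 hz hu hDEpos hDE1 hub
  have hdenpos : 0 < W z * (W z + D * E) := mul_pos hu huε
  have hkey : B * D * (E * Q) + ((k:ℝ) / 3) * C3 < A * D := by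
    have h1 : D * (B * (E * Q)) < D * (A / 2) := mul_lt_mul_of_pos_left hBEQ hDpos
    have h2 : D * (B * (E * Q)) = B * D * (E * Q) := by ring
    linarith only [h1, h2, hAD]
  have hstep1 : E * (2 * γ * D * E + ((k:ℝ) / 3) * (W z + D * E - z * deriv W z))
      ≤ E * (B * D * E + ((k:ℝ) / 3) * (C3 / Q)) := by
    have hk0 : (0:ℝ) ≤ (k:ℝ) / 3 := by positivity
    have h3 := mul_le_mul_of_nonneg_left hsp2 hk0
    have h4 : 2 * γ * D * E + ((k:ℝ) / 3) * (W z + D * E - z * deriv W z)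
        ≤ B * D * E + ((k:ℝ) / 3) * (C3 / Q) := by
      rw [hB]
      linarith only [h3]
    exact mul_le_mul_of_nonneg_left h4 hEpos.le
  have hstep2 : E * (B * D * E + ((k:ℝ) / 3) * (C3 / Q)) < A * D * E / Q := by
    have hL : E * (B * D * E + ((k:ℝ) / 3) * (C3 / Q))
        = (E / Q) * (B * D * (E * Q) + ((k:ℝ) / 3) * C3) := by
      field_simp
    have hR : A * D * E / Q = (E / Q) * (A * D) := by ring
    rw [hL, hR]
    exact mul_lt_mul_of_pos_left hkey (by positivity)
  have hstep3 : A * D * E / Q ≤ 3 * (D * E) / (W z * (W z + D * E)) := by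
    have hAeq : A * D * E / Q = 3 * (D * E) / (C2 * (C2 + 1) * Q) := by
      rw [hA]
      field_simp
    rw [hAeq]
    exact div_le_div_of_nonneg_left (by positivity) hdenpos hden
  linarith only [hstep1, hstep2, hstep3]
end

section
/- Let s0 < T be real numbers, C1 > 0, and let u : (0,∞) × [s0,T] → (0,∞) be a smooth solution of u_t = u_{xx}/(1+u_x²) + (3/x)·u_x − 3/u such that u(x,t) ≥ x for all (x,t) ∈ (0,∞) × [s0,T], u_x is bounded on (0,∞) × [s0,T], and 0 ≤ u_x(x,s0) ≤ C1 for all x > 0. Then 0 ≤ u_x(x,t) ≤ C1 for all x > 0 and all t ∈ [s0,T]. -/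
open Filter Set

open Filter Set Topology Real
set_option maxHeartbeats 1000000

lemma aux_second_deriv_nonpos {f g : ℝ → ℝ} {x f'' : ℝ}
    (hg : ∀ᶠ y in 𝓝 x, HasDerivAt f (g y) y)
    (hg' : HasDerivAt g f'' x)
    (hmax : IsLocalMax f x) : f'' ≤ 0 := by
  by_contra h
  push_neg at h
  have hgx : g x = 0 := hmax.hasDerivAt_eq_zero hg.self_of_nhds
  have hslope := hasDerivAt_iff_tendsto_slope.1 hg'
  have h1 : ∀ᶠ y in 𝓝[≠] x, 0 < slope g x y :=
    hslope.eventually (eventually_gt_nhds h)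
  have h2 : ∀ᶠ y in 𝓝[>] x, 0 < slope g x y :=
    h1.filter_mono (nhdsWithin_mono x (fun y hy => ne_of_gt hy))
  have hpos : ∀ᶠ y in 𝓝[>] x, 0 < g y := by
    filter_upwards [h2, self_mem_nhdsWithin] with y hy (hxy : y ∈ Ioi x)
    have hs : slope g x y = (g y - g x) / (y - x) := slope_def_field g x y
    rw [hs, hgx, sub_zero] at hy
    have : 0 < y - x := sub_pos.2 hxy
    have := mul_pos hy this
    rwa [div_mul_cancel₀] at this
    exact ne_of_gt ‹0 < y - x›
  have hder : ∀ᶠ y in 𝓝[>] x, HasDerivAt f (g y) y := hg.filter_mono nhdsWithin_le_nhds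
  have hmax' : ∀ᶠ y in 𝓝[>] x, f y ≤ f x := hmax.filter_mono nhdsWithin_le_nhds
  obtain ⟨u, hux, hu⟩ := mem_nhdsGT_iff_exists_Ioc_subset.1
    (hpos.and (hder.and hmax') : _)
  have hcont : ContinuousOn f (Icc x u) := by
    intro z hz
    rcases eq_or_lt_of_le hz.1 with rfl | hxz
    · exact hg.self_of_nhds.continuousAt.continuousWithinAt
    · exact ((hu ⟨hxz, hz.2⟩).2.1.continuousAt).continuousWithinAt
  have hmono : StrictMonoOn f (Icc x u) := by
    apply strictMonoOn_of_deriv_pos (convex_Icc x u) hcont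
    intro z hz
    rw [interior_Icc] at hz
    have hz' := hu ⟨hz.1, le_of_lt hz.2⟩
    rw [hz'.2.1.deriv]
    exact hz'.1
  have hlt : f x < f u := hmono ⟨le_rfl, le_of_lt hux⟩ ⟨le_of_lt hux, le_rfl⟩ hux
  exact absurd (hu ⟨hux, le_rfl⟩).2.2 (not_le.2 hlt)


lemma aux_max_principle (s0 T : ℝ) (hsT : s0 < T) (b : ℝ) (hb : 0 ≤ b)
    (Θ : ℝ → ℝ → ℝ)
    (hcont : ContinuousOn (fun q : ℝ × ℝ => Θ q.1 q.2) (Ioi (0:ℝ) ×ˢ Icc s0 T))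
    (hbound : ∀ x > (0:ℝ), ∀ t ∈ Icc s0 T, |Θ x t| ≤ 2)
    (hini : ∀ x > (0:ℝ), Θ x s0 ≤ b)
    (hdiff : ∀ x > (0:ℝ), ∀ t ∈ Ioo s0 T, b < Θ x t →
      ∃ (θx θxx θt a : ℝ) (g : ℝ → ℝ),
        (∀ᶠ y in 𝓝 x, HasDerivAt (fun z => Θ z t) (g y) y) ∧ g x = θx ∧
        HasDerivAt g θxx x ∧
        HasDerivAt (fun s => Θ x s) θt t ∧
        0 < a ∧ a ≤ 1 ∧ θt ≤ a * θxx + (3/x) * θx) :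
    ∀ x > (0:ℝ), ∀ t ∈ Icc s0 T, Θ x t ≤ b := by
  have key : ∀ δ > (0:ℝ), ∀ x > (0:ℝ), ∀ t ∈ Ico s0 T,
      Θ x t ≤ b + δ * Real.exp (9*(t-s0)) * (x^2 + 1/x^2) := by
    intro δ hδ
    by_contra hcon
    push_neg at hcon
    obtain ⟨x₀, hx₀, t₀, ht₀, hgt⟩ := hcon
    set φ : ℝ → ℝ → ℝ := fun x t => δ * Real.exp (9*(t-s0)) * (x^2 + 1/x^2) with hφdef
    have hφpos : ∀ x > (0:ℝ), ∀ t : ℝ, 0 < δ * Real.exp (9*(t-s0)) * (x^2 + 1/x^2) := by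
      intro x hx t
      have : 0 < x^2 + 1/x^2 := by positivity
      positivity
    set t' : ℝ := (t₀ + T)/2 with ht'def
    have ht₀T : t₀ < T := ht₀.2
    have ht't : t₀ < t' := by simp only [ht'def]; linarith
    have ht'T : t' < T := by simp only [ht'def]; linarith
    have hs0t' : s0 < t' := lt_of_le_of_lt ht₀.1 ht't
    set x₁ : ℝ := min x₀ (Real.sqrt (δ/3)) with hx₁def
    set x₂ : ℝ := max x₀ (Real.sqrt (3/δ)) with hx₂def
    have hx₁pos : 0 < x₁ := lt_min hx₀ (Real.sqrt_pos.2 (by positivity))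
    have hx₁le : x₁ ≤ x₀ := min_le_left _ _
    have hx₂ge : x₀ ≤ x₂ := le_max_left _ _
    have hx₁sq : x₁^2 ≤ δ/3 := by
      have h1 : x₁ ≤ Real.sqrt (δ/3) := min_le_right _ _
      have := Real.sq_sqrt (le_of_lt (show (0:ℝ) < δ/3 by positivity))
      nlinarith [hx₁pos]
    have hx₂sq : 3/δ ≤ x₂^2 := by
      have h1 : Real.sqrt (3/δ) ≤ x₂ := le_max_right _ _
      have h2 := Real.sq_sqrt (le_of_lt (show (0:ℝ) < 3/δ by positivity))
      have h0 : 0 ≤ Real.sqrt (3/δ) := Real.sqrt_nonneg _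
      nlinarith
    have hδx₁ : 3 ≤ δ * (1/x₁^2) := by
      rw [mul_one_div, le_div_iff₀ (by positivity)]
      nlinarith
    have hδx₂ : 3 ≤ δ * x₂^2 := by
      have := (div_le_iff₀ hδ).1 hx₂sq
      nlinarith
    set K : Set (ℝ × ℝ) := Icc x₁ x₂ ×ˢ Icc s0 t' with hKdef
    set W : ℝ × ℝ → ℝ := fun q => Θ q.1 q.2 - b - φ q.1 q.2 with hWdef
    have hKS : K ⊆ Ioi (0:ℝ) ×ˢ Icc s0 T := by
      rintro ⟨x, t⟩ ⟨hx, ht⟩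
      exact ⟨lt_of_lt_of_le hx₁pos hx.1, ht.1, le_trans ht.2 (le_of_lt ht'T)⟩
    have hWcont : ContinuousOn W K := by
      apply ContinuousOn.sub
      · apply ContinuousOn.sub (hcont.mono hKS) continuousOn_const
      · apply ContinuousOn.mul
        · exact (continuous_const.mul ((Real.continuous_exp.comp
            ((continuous_const.mul (continuous_snd.sub continuous_const)))))).continuousOn
        · apply ContinuousOn.add
          · exact (continuous_fst.pow 2).continuousOn
          · apply ContinuousOn.div continuousOn_const (continuous_fst.pow 2).continuousOn
            rintro ⟨x, t⟩ ⟨hx, _⟩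
            have : 0 < x := lt_of_lt_of_le hx₁pos hx.1
            exact pow_ne_zero 2 (ne_of_gt this)
    have hq₀K : ((x₀, t₀) : ℝ × ℝ) ∈ K :=
      ⟨⟨hx₁le, hx₂ge⟩, ⟨ht₀.1, le_of_lt ht't⟩⟩
    obtain ⟨q, hqK, hqmax⟩ := (isCompact_Icc.prod isCompact_Icc).exists_isMaxOn
      ⟨(x₀, t₀), hq₀K⟩ hWcont
    obtain ⟨xs, ts⟩ := q
    have hxsK : xs ∈ Icc x₁ x₂ := hqK.1
    have htsK : ts ∈ Icc s0 t' := hqK.2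
    have hxs_pos : 0 < xs := lt_of_lt_of_le hx₁pos hxsK.1
    have hts_Icc : ts ∈ Icc s0 T := ⟨htsK.1, le_trans htsK.2 (le_of_lt ht'T)⟩
    have hM : 0 < W (xs, ts) := by
      have h0 : 0 < W (x₀, t₀) := by
        simp only [hWdef, hφdef]
        linarith
      exact lt_of_lt_of_le h0 (hqmax hq₀K)
    -- exp factor at least 1 on K
    have hexp1 : ∀ t : ℝ, s0 ≤ t → (1:ℝ) ≤ Real.exp (9*(t-s0)) := by
      intro t ht
      rw [show (1:ℝ) = Real.exp 0 by simp]
      exact Real.exp_le_exp.2 (by nlinarith)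
    -- ts > s0
    have hts_gt : s0 < ts := by
      rcases lt_or_eq_of_le htsK.1 with h | h
      · exact h
      · exfalso
        have h1 : Θ xs s0 ≤ b := hini xs hxs_pos
        have h2 := hφpos xs hxs_pos s0
        rw [← h] at hM
        simp only [hWdef, hφdef] at hM
        linarith
    -- xs strictly inside
    have hedge : ∀ x, 0 < x → 3 ≤ δ * (x^2 + 1/x^2) → W (x, ts) < 0 := by
      intro x hx h3
      have hb1 : |Θ x ts| ≤ 2 := hbound x hx ts hts_Icc
      have he := hexp1 ts hts_Icc.1
      have hxx : 0 < x^2 + 1/x^2 := by positivity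
      have h4 : 3 * 1 ≤ (δ * (x^2 + 1/x^2)) * Real.exp (9*(ts-s0)) :=
        mul_le_mul h3 he one_pos.le (by positivity)
      have h5 : δ * Real.exp (9*(ts-s0)) * (x^2 + 1/x^2)
          = (δ * (x^2 + 1/x^2)) * Real.exp (9*(ts-s0)) := by ring
      have habs := abs_le.1 hb1
      simp only [hWdef, hφdef]
      linarith
    have hxs1 : x₁ < xs := by
      rcases lt_or_eq_of_le hxsK.1 with h | h
      · exact h
      · exfalso
        have hexp : δ * (x₁^2 + 1/x₁^2) = δ*x₁^2 + δ*(1/x₁^2) := by ring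
        have h0 : 0 ≤ δ * x₁^2 := by positivity
        have := hedge x₁ hx₁pos (by linarith)
        rw [h] at this
        linarith
    have hxs2 : xs < x₂ := by
      rcases lt_or_eq_of_le hxsK.2 with h | h
      · exact h
      · exfalso
        have h3 : 3 ≤ δ * (x₂^2 + 1/x₂^2) := by
          have hexp : δ * (x₂^2 + 1/x₂^2) = δ*x₂^2 + δ*(1/x₂^2) := by ring
          have hx₂pos : 0 < x₂ := lt_of_lt_of_le hx₁pos (le_trans hxsK.1 hxsK.2)
          have h0 : 0 ≤ δ * (1/x₂^2) := by positivity
          linarith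
        have := hedge x₂ (lt_of_lt_of_le hx₁pos (le_trans hxsK.1 hxsK.2)) h3
        rw [← h] at this
        linarith
    have hts_Ioo : ts ∈ Ioo s0 T := ⟨hts_gt, lt_of_le_of_lt htsK.2 ht'T⟩
    have hΘgt : b < Θ xs ts := by
      have := hφpos xs hxs_pos ts
      simp only [hWdef, hφdef] at hM
      linarith
    obtain ⟨θx, θxx, θt, a, g, hgfam, hgx, hg', hθt, ha0, ha1, hineq⟩ :=
      hdiff xs hxs_pos ts hts_Ioo hΘgt
    set E : ℝ := δ * Real.exp (9*(ts - s0)) with hEdef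
    have hE : 0 < E := by positivity
    have hxs_ne : xs ≠ 0 := ne_of_gt hxs_pos
    set ψ : ℝ → ℝ := fun y => E * (2*y - 2/y^3) with hψdef
    have hψ : ∀ y : ℝ, y ≠ 0 →
        HasDerivAt (fun z => δ * Real.exp (9*(ts-s0)) * (z^2 + 1/z^2)) (ψ y) y := by
      intro y hy
      have ha : HasDerivAt (fun z : ℝ => z^2) (2*y) y := by
        simpa using hasDerivAt_pow 2 y
      have hbd : HasDerivAt (fun z : ℝ => 1/z^2)
          ((0 * y^2 - 1 * (2*y)) / (y^2)^2) y :=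
        (hasDerivAt_const y (1:ℝ)).div ha (pow_ne_zero 2 hy)
      have hsum := (ha.add hbd).const_mul (δ * Real.exp (9*(ts-s0)))
      refine HasDerivAt.congr_deriv hsum ?_
      simp only [hψdef, hEdef]
      field_simp
      ring
    have hψ' : HasDerivAt ψ (E * (2 + 6/xs^4)) xs := by
      have hA : HasDerivAt (fun y : ℝ => 2*y) (2*1) xs := (hasDerivAt_id xs).const_mul 2
      have hp : HasDerivAt (fun y : ℝ => y^3) (3 * xs^2) xs := by
        simpa using hasDerivAt_pow 3 xs
      have hB : HasDerivAt (fun y : ℝ => 2/y^3)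
          ((0 * xs^3 - 2 * (3 * xs^2)) / (xs^3)^2) xs :=
        (hasDerivAt_const xs (2:ℝ)).div hp (pow_ne_zero 3 hxs_ne)
      have := (hA.sub hB).const_mul E
      refine HasDerivAt.congr_deriv this ?_
      field_simp
      ring
    -- local max in x
    have hloc : IsLocalMax
        (fun y => Θ y ts - b - δ * Real.exp (9*(ts-s0)) * (y^2 + 1/y^2)) xs := by
      have hmem : Ioo x₁ x₂ ∈ 𝓝 xs := isOpen_Ioo.mem_nhds ⟨hxs1, hxs2⟩
      filter_upwards [hmem] with y hy
      have hyK : ((y, ts) : ℝ × ℝ) ∈ K := ⟨⟨le_of_lt hy.1, le_of_lt hy.2⟩, htsK⟩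
      have := hqmax hyK
      simp only [hWdef, hφdef] at this ⊢
      exact this
    have hfam : ∀ᶠ y in 𝓝 xs, HasDerivAt
        (fun z => Θ z ts - b - δ * Real.exp (9*(ts-s0)) * (z^2 + 1/z^2))
        (g y - ψ y) y := by
      have hmem : Ioi (0:ℝ) ∈ 𝓝 xs := isOpen_Ioi.mem_nhds hxs_pos
      filter_upwards [hgfam, hmem] with y hy hypos
      exact (hy.sub_const b).sub (hψ y (ne_of_gt hypos))
    have hd2 : HasDerivAt (fun y => g y - ψ y) (θxx - E * (2 + 6/xs^4)) xs :=
      hg'.sub hψ'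
    have hθxx_le : θxx - E * (2 + 6/xs^4) ≤ 0 :=
      aux_second_deriv_nonpos hfam hd2 hloc
    have hθx_eq : θx = ψ xs := by
      have h0 : g xs - ψ xs = 0 := hloc.hasDerivAt_eq_zero hfam.self_of_nhds
      rw [← hgx]
      linarith
    -- time derivative at the max
    have hφt : HasDerivAt (fun s => δ * Real.exp (9*(s-s0)) * (xs^2 + 1/xs^2))
        (9 * (E * (xs^2 + 1/xs^2))) ts := by
      have hlin : HasDerivAt (fun s : ℝ => 9*(s - s0)) (9 * 1) ts :=
        ((hasDerivAt_id ts).sub_const s0).const_mul 9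
      have hexp : HasDerivAt (fun s : ℝ => Real.exp (9*(s-s0)))
          (Real.exp (9*(ts-s0)) * (9 * 1)) ts := hlin.exp
      have := (hexp.const_mul δ).mul_const (xs^2 + 1/xs^2)
      refine HasDerivAt.congr_deriv this ?_
      simp only [hEdef]
      ring
    have hk : HasDerivAt (fun s => Θ xs s - b - δ * Real.exp (9*(s-s0)) * (xs^2 + 1/xs^2))
        (θt - 9 * (E * (xs^2 + 1/xs^2))) ts := (hθt.sub_const b).sub hφt
    have hge : 0 ≤ θt - 9 * (E * (xs^2 + 1/xs^2)) := by
      have htend := hasDerivAt_iff_tendsto_slope.1 hk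
      have htend' : Tendsto
          (slope (fun s => Θ xs s - b - δ * Real.exp (9*(s-s0)) * (xs^2 + 1/xs^2)) ts)
          (𝓝[<] ts) (𝓝 (θt - 9 * (E * (xs^2 + 1/xs^2)))) :=
        htend.mono_left (nhdsWithin_mono ts (fun s hs => ne_of_lt hs))
      refine ge_of_tendsto htend' ?_
      have hmem : Ioo s0 ts ∈ 𝓝[<] ts := Ioo_mem_nhdsLT_of_mem ⟨hts_gt, le_rfl⟩
      filter_upwards [hmem] with s hs
      have hsK : ((xs, s) : ℝ × ℝ) ∈ K :=
        ⟨hxsK, ⟨le_of_lt hs.1, le_trans (le_of_lt hs.2) htsK.2⟩⟩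
      have hle := hqmax hsK
      simp only [hWdef, hφdef, mem_setOf_eq] at hle
      rw [slope_def_field]
      apply div_nonneg_of_nonpos
      · simpa using sub_nonpos.2 hle
      · linarith [hs.2]
    -- final contradiction
    have hq4 : 0 < 1/xs^4 := by positivity
    have e1 : 3 / xs * (E * (2*xs - 2/xs^3)) = 6*E - 6*E*(1/xs^4) := by
      field_simp
      ring
    rw [hθx_eq] at hineq
    simp only [hψdef] at hineq
    have h2' : 2 ≤ xs^2 + 1/xs^2 := by
      have key2 : xs^2 + 1/xs^2 - 2 = (xs - 1/xs)^2 := by field_simp; ring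
      linarith [sq_nonneg (xs - 1/xs), key2]
    have c1 : a * θxx ≤ a * (E * (2 + 6/xs^4)) :=
      mul_le_mul_of_nonneg_left (by linarith) ha0.le
    have c2 : a * (E * (2 + 6/xs^4)) ≤ 8*E - (6*E - 6*E*(1/xs^4)) := by
      have hr : (0:ℝ) ≤ E*(1/xs^4) := by positivity
      have h1 : a*(E*(1/xs^4)) ≤ E*(1/xs^4) := mul_le_of_le_one_left hr ha1
      have h2a : a*E ≤ E := mul_le_of_le_one_left hE.le ha1
      have e : a * (E * (2 + 6/xs^4)) = 2*(a*E) + 6*(a*(E*(1/xs^4))) := by ring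
      have e2 : 8*E - (6*E - 6*E*(1/xs^4)) = 2*E + 6*(E*(1/xs^4)) := by ring
      rw [e, e2]; linarith
    have c3 : 18*E ≤ 9 * (E * (xs^2 + 1/xs^2)) := by nlinarith [mul_pos hE hq4]
    linarith
  have hIco : ∀ x > (0:ℝ), ∀ t ∈ Ico s0 T, Θ x t ≤ b := by
    intro x hx t ht
    refine le_of_forall_pos_le_add ?_
    intro ε hε
    have hc : 0 < Real.exp (9*(t-s0)) * (x^2 + 1/x^2) := by positivity
    have hδ : 0 < ε / (Real.exp (9*(t-s0)) * (x^2 + 1/x^2)) := by positivity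
    have hk := key _ hδ x hx t ht
    have he : ε / (Real.exp (9*(t-s0)) * (x^2 + 1/x^2)) * Real.exp (9*(t-s0)) * (x^2+1/x^2)
        = ε := by
      rw [mul_assoc]
      exact div_mul_cancel₀ ε (ne_of_gt hc)
    linarith
  intro x hx t ht
  rcases lt_or_eq_of_le ht.2 with hlt | heqT
  · exact hIco x hx t ⟨ht.1, hlt⟩
  · subst heqT
    have h1 := hcont (x, t) ⟨hx, ht⟩
    have h2 : ContinuousWithinAt (fun s : ℝ => ((x, s) : ℝ × ℝ)) (Icc s0 t) t :=
      (Continuous.continuousWithinAt (by continuity))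
    have hlim0 := ContinuousWithinAt.comp (g := fun q : ℝ × ℝ => Θ q.1 q.2)
      (f := fun s : ℝ => ((x, s) : ℝ × ℝ)) h1 h2 (fun s hs => ⟨hx, hs⟩)
    have hlim : ContinuousWithinAt (fun s => Θ x s) (Icc s0 t) t := hlim0
    have hlim' : Tendsto (fun s => Θ x s) (𝓝[Ico s0 t] t) (𝓝 (Θ x t)) :=
      hlim.tendsto.mono_left (nhdsWithin_mono _ Ico_subset_Icc_self)
    have hne : (𝓝[Ico s0 t] t).NeBot := by
      have hmem : t ∈ closure (Ico s0 t) := by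
        rw [closure_Ico (ne_of_lt hsT)]
        exact ⟨le_of_lt hsT, le_rfl⟩
      exact mem_closure_iff_nhdsWithin_neBot.1 hmem
    refine le_of_tendsto hlim' ?_
    filter_upwards [self_mem_nhdsWithin] with s hs
    exact hIco x hx s hs

lemma aux_pde (s0 T : ℝ) (u : ℝ → ℝ → ℝ)
    (husmooth : ContDiffOn ℝ (⊤ : ℕ∞) (fun q : ℝ × ℝ => u q.1 q.2)
      (Set.Ioi (0:ℝ) ×ˢ Set.Icc s0 T))
    (hupos : ∀ x > (0:ℝ), ∀ t ∈ Set.Icc s0 T, 0 < u x t)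
    (heq : ∀ x > (0:ℝ), ∀ t ∈ Set.Icc s0 T,
      deriv (fun s => u x s) t
        = deriv (deriv (fun y => u y t)) x / (1 + (deriv (fun y => u y t) x) ^ 2)
          + (3 / x) * deriv (fun y => u y t) x - 3 / u x t)
    (x : ℝ) (hx : 0 < x) (t : ℝ) (ht : t ∈ Set.Ioo s0 T) :
    ∃ (θx θxx θt : ℝ) (g : ℝ → ℝ),
      (∀ᶠ y in 𝓝 x, HasDerivAt (fun z => Real.arctan (deriv (fun w => u w t) z)) (g y) y) ∧
      g x = θx ∧ HasDerivAt g θxx x ∧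
      HasDerivAt (fun s => Real.arctan (deriv (fun w => u w s) x)) θt t ∧
      θt = (1/(1 + (deriv (fun w => u w t) x)^2)) * θxx + (3/x) * θx
           + (3/(u x t)^2 - 3/x^2)
             * ((deriv (fun w => u w t) x)/(1 + (deriv (fun w => u w t) x)^2)) := by
  set S : Set (ℝ × ℝ) := Set.Ioi (0:ℝ) ×ˢ Set.Icc s0 T with hSdef
  set V : Set (ℝ × ℝ) := Set.Ioi (0:ℝ) ×ˢ Set.Ioo s0 T with hVdef
  set U : ℝ × ℝ → ℝ := fun q => u q.1 q.2 with hUdef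
  have hVopen : IsOpen V := isOpen_Ioi.prod isOpen_Ioo
  have hVS : V ⊆ S := prod_mono subset_rfl Set.Ioo_subset_Icc_self
  have hUV : ContDiffOn ℝ (⊤ : ℕ∞) U V := husmooth.mono hVS
  have hqV : ((x, t) : ℝ × ℝ) ∈ V := ⟨hx, ht⟩
  have htIcc : t ∈ Set.Icc s0 T := Set.Ioo_subset_Icc_self ht
  -- honest differentiability of U on V
  have hdiffU : ∀ p ∈ V, DifferentiableAt ℝ U p := by
    intro p hp
    exact (hUV.contDiffAt (hVopen.mem_nhds hp)).differentiableAt (by simp)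
  -- partial derivatives via fderiv
  have hux : ∀ y ∈ Set.Ioi (0:ℝ), ∀ s ∈ Set.Ioo s0 T,
      HasDerivAt (fun z => u z s) (fderiv ℝ U (y, s) ((1:ℝ), (0:ℝ))) y := by
    intro y hy s hs
    have hline : HasDerivAt (fun z : ℝ => ((z, s) : ℝ × ℝ)) ((1:ℝ), (0:ℝ)) y :=
      (hasDerivAt_id y).prodMk (hasDerivAt_const y s)
    exact ((hdiffU (y, s) ⟨hy, hs⟩).hasFDerivAt).comp_hasDerivAt y hline
  have hut : ∀ y ∈ Set.Ioi (0:ℝ), ∀ s ∈ Set.Ioo s0 T,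
      HasDerivAt (fun τ => u y τ) (fderiv ℝ U (y, s) ((0:ℝ), (1:ℝ))) s := by
    intro y hy s hs
    have hline : HasDerivAt (fun τ : ℝ => ((y, τ) : ℝ × ℝ)) ((0:ℝ), (1:ℝ)) s :=
      (hasDerivAt_const s y).prodMk (hasDerivAt_id s)
    exact ((hdiffU (y, s) ⟨hy, hs⟩).hasFDerivAt).comp_hasDerivAt s hline
  -- slice in x at the fixed time t
  set v1 : ℝ → ℝ := deriv (fun y => u y t) with hv1def
  have hfslice : ContDiffOn ℝ (⊤ : ℕ∞) (fun y => u y t) (Set.Ioi (0:ℝ)) := by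
    have hmap : Set.MapsTo (fun y : ℝ => ((y, t) : ℝ × ℝ)) (Set.Ioi (0:ℝ)) S :=
      fun y hy => ⟨hy, htIcc⟩
    exact husmooth.comp ((contDiff_id.prodMk contDiff_const).contDiffOn) hmap
  have hv1smooth : ContDiffOn ℝ (⊤ : ℕ∞) v1 (Set.Ioi (0:ℝ)) :=
    hfslice.deriv_of_isOpen isOpen_Ioi (by simp)
  set v2 : ℝ → ℝ := deriv v1 with hv2def
  have hv2smooth : ContDiffOn ℝ (⊤ : ℕ∞) v2 (Set.Ioi (0:ℝ)) :=
    hv1smooth.deriv_of_isOpen isOpen_Ioi (by simp)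
  have hfd : ∀ y ∈ Set.Ioi (0:ℝ), HasDerivAt (fun z => u z t) (v1 y) y := by
    intro y hy
    exact ((hfslice.contDiffAt (isOpen_Ioi.mem_nhds hy)).differentiableAt (by simp)).hasDerivAt
  have hv1d : ∀ y ∈ Set.Ioi (0:ℝ), HasDerivAt v1 (v2 y) y := by
    intro y hy
    exact ((hv1smooth.contDiffAt (isOpen_Ioi.mem_nhds hy)).differentiableAt (by simp)).hasDerivAt
  have hv2d : HasDerivAt v2 (deriv v2 x) x :=
    ((hv2smooth.contDiffAt (isOpen_Ioi.mem_nhds hx)).differentiableAt (by simp)).hasDerivAt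
  -- identify v1 with the fderiv expression on the slice
  have hv1eq : ∀ y ∈ Set.Ioi (0:ℝ), v1 y = fderiv ℝ U (y, t) ((1:ℝ), (0:ℝ)) := by
    intro y hy
    exact (hux y hy t ht).deriv.symm ▸ rfl
  -- second derivative and Schwarz symmetry
  have hFsmooth : ContDiffOn ℝ (⊤ : ℕ∞) (fun p => fderiv ℝ U p) V :=
    hUV.fderiv_of_isOpen hVopen (by simp)
  have hF2 : DifferentiableAt ℝ (fderiv ℝ U) (x, t) :=
    (hFsmooth.contDiffAt (hVopen.mem_nhds hqV)).differentiableAt (by simp)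
  set F2 := fderiv ℝ (fderiv ℝ U) (x, t) with hF2def
  have hsymm : ∀ vv ww : ℝ × ℝ, F2 vv ww = F2 ww vv := by
    intro vv ww
    refine second_derivative_symmetric_of_eventually (f := U) ?_ hF2.hasFDerivAt vv ww
    filter_upwards [hVopen.mem_nhds hqV] with p hp
    exact (hdiffU p hp).hasFDerivAt
  have hcurveT : HasDerivAt (fun s : ℝ => ((x, s) : ℝ × ℝ)) ((0:ℝ), (1:ℝ)) t :=
    (hasDerivAt_const t x).prodMk (hasDerivAt_id t)
  have hP1comp : HasDerivAt (fun s => fderiv ℝ U (x, s)) (F2 ((0:ℝ),(1:ℝ))) t :=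
    hF2.hasFDerivAt.comp_hasDerivAt t hcurveT
  have hP1t : HasDerivAt (fun s => fderiv ℝ U (x, s) ((1:ℝ),(0:ℝ)))
      (F2 ((0:ℝ),(1:ℝ)) ((1:ℝ),(0:ℝ))) t := by
    have := hP1comp.clm_apply (hasDerivAt_const t (((1:ℝ),(0:ℝ)) : ℝ × ℝ))
    simpa using this
  have hcurveX : HasDerivAt (fun y : ℝ => ((y, t) : ℝ × ℝ)) ((1:ℝ), (0:ℝ)) x :=
    (hasDerivAt_id x).prodMk (hasDerivAt_const x t)
  have hP2comp : HasDerivAt (fun y => fderiv ℝ U (y, t)) (F2 ((1:ℝ),(0:ℝ))) x :=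
    hF2.hasFDerivAt.comp_hasDerivAt x hcurveX
  have hP2x : HasDerivAt (fun y => fderiv ℝ U (y, t) ((0:ℝ),(1:ℝ)))
      (F2 ((1:ℝ),(0:ℝ)) ((0:ℝ),(1:ℝ))) x := by
    have := hP2comp.clm_apply (hasDerivAt_const x (((0:ℝ),(1:ℝ)) : ℝ × ℝ))
    simpa using this
  -- the PDE as an identity along the x-slice
  have heqn : ∀ y ∈ Set.Ioi (0:ℝ),
      fderiv ℝ U (y, t) ((0:ℝ),(1:ℝ))
        = v2 y / (1 + (v1 y)^2) + (3/y) * v1 y - 3 / u y t := by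
    intro y hy
    have h1 := (hut y hy t ht).deriv
    rw [← h1]
    exact heq y hy t htIcc
  set v := v1 x with hvdef
  set w := v2 x with hwdef
  set z := deriv v2 x with hzdef
  have hune : u x t ≠ 0 := ne_of_gt (hupos x hx t htIcc)
  have hden0 : (1 + v^2) ≠ 0 := by positivity
  have hdenD : HasDerivAt (fun y => 1 + (v1 y)^2) (2 * v * w) x := by
    have := ((hv1d x hx).pow 2).const_add 1
    refine HasDerivAt.congr_deriv this ?_
    push_cast
    ring
  have hA : HasDerivAt (fun y => v2 y / (1 + (v1 y)^2))
      ((z * (1 + v^2) - w * (2*v*w)) / ((1 + v^2)^2)) x := hv2d.div hdenD hden0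
  have hB : HasDerivAt (fun y => (3/y) * v1 y)
      (((0*x - 3*1)/x^2) * v + (3/x) * w) x :=
    ((hasDerivAt_const x (3:ℝ)).div (hasDerivAt_id x) (ne_of_gt hx)).mul (hv1d x hx)
  have hC : HasDerivAt (fun y => 3 / u y t)
      ((0 * u x t - 3 * v)/(u x t)^2) x :=
    (hasDerivAt_const x (3:ℝ)).div (hfd x hx) hune
  have hRHS := (hA.add hB).sub hC
  have hLHS : HasDerivAt (fun y => v2 y / (1 + (v1 y)^2) + (3/y) * v1 y - 3 / u y t)
      (F2 ((1:ℝ),(0:ℝ)) ((0:ℝ),(1:ℝ))) x := by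
    apply hP2x.congr_of_eventuallyEq
    filter_upwards [isOpen_Ioi.mem_nhds hx] with y hy
    exact (heqn y hy).symm
  have hkey : F2 ((1:ℝ),(0:ℝ)) ((0:ℝ),(1:ℝ))
      = (z * (1 + v^2) - w * (2*v*w)) / ((1 + v^2)^2)
        + (((0*x - 3*1)/x^2) * v + (3/x) * w) - (0 * u x t - 3 * v)/(u x t)^2 :=
    hLHS.unique hRHS
  have hvt : HasDerivAt (fun s => deriv (fun w' => u w' s) x)
      (F2 ((0:ℝ),(1:ℝ)) ((1:ℝ),(0:ℝ))) t := by
    apply hP1t.congr_of_eventuallyEq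
    filter_upwards [isOpen_Ioo.mem_nhds ht] with s hs
    exact (hux x hx s hs).deriv
  have hθt : HasDerivAt (fun s => Real.arctan (deriv (fun w' => u w' s) x))
      ((1/(1 + v^2)) * (F2 ((0:ℝ),(1:ℝ)) ((1:ℝ),(0:ℝ)))) t :=
    hvt.arctan
  set gfun : ℝ → ℝ := fun y => v2 y / (1 + (v1 y)^2) with hgdef
  have hfam : ∀ᶠ y in 𝓝 x, HasDerivAt (fun z' => Real.arctan (v1 z')) (gfun y) y := by
    filter_upwards [isOpen_Ioi.mem_nhds hx] with y hy
    have h1 := (Real.hasDerivAt_arctan (v1 y)).comp y (hv1d y hy)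
    have h2 : (1:ℝ)/(1+(v1 y)^2) * v2 y = gfun y := one_div_mul_eq_div _ _
    exact h2 ▸ h1
  refine ⟨w/(1 + v^2), (z * (1 + v^2) - w * (2*v*w)) / ((1 + v^2)^2),
    (1/(1 + v^2)) * (F2 ((0:ℝ),(1:ℝ)) ((1:ℝ),(0:ℝ))), gfun, hfam, rfl, hA, hθt, ?_⟩
  rw [hsymm ((0:ℝ),(1:ℝ)) ((1:ℝ),(0:ℝ)), hkey]
  have hx' : x ≠ 0 := ne_of_gt hx
  field_simp
  ring
open Filter Set Topology Real

set_option maxHeartbeats 1000000 in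
/-- Gradient bound via the maximum principle: monotonicity `0 ≤ u_x ≤ C1` at the initial
time persists for a solution of the profile equation satisfying `u(x,t) ≥ x`. -/
theorem stmt_13
    (s0 T : ℝ) (hsT : s0 < T) (C1 : ℝ) (hC1 : 0 < C1)
    (u : ℝ → ℝ → ℝ)
    (husmooth : ContDiffOn ℝ (⊤ : ℕ∞) (fun q : ℝ × ℝ => u q.1 q.2)
      (Set.Ioi (0:ℝ) ×ˢ Set.Icc s0 T))
    (hupos : ∀ x > (0:ℝ), ∀ t ∈ Set.Icc s0 T, 0 < u x t)
    (heq : ∀ x > (0:ℝ), ∀ t ∈ Set.Icc s0 T,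
      deriv (fun s => u x s) t
        = deriv (deriv (fun y => u y t)) x / (1 + (deriv (fun y => u y t) x) ^ 2)
          + (3 / x) * deriv (fun y => u y t) x - 3 / u x t)
    (hgex : ∀ x > (0:ℝ), ∀ t ∈ Set.Icc s0 T, x ≤ u x t)
    (hbdd : ∃ Cb : ℝ, ∀ x > (0:ℝ), ∀ t ∈ Set.Icc s0 T,
      |deriv (fun y => u y t) x| ≤ Cb)
    (hinit : ∀ x > (0:ℝ),
      0 ≤ deriv (fun y => u y s0) x ∧ deriv (fun y => u y s0) x ≤ C1) :
    ∀ x > (0:ℝ), ∀ t ∈ Set.Icc s0 T,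
      0 ≤ deriv (fun y => u y t) x ∧ deriv (fun y => u y t) x ≤ C1 := by
  clear hbdd
  set S : Set (ℝ × ℝ) := Set.Ioi (0:ℝ) ×ˢ Set.Icc s0 T with hSdef
  set U : ℝ × ℝ → ℝ := fun q => u q.1 q.2 with hUdef
  -- unique differentiability of S
  have hSconv : Convex ℝ S := (convex_Ioi 0).prod (convex_Icc s0 T)
  have hSint : (interior S).Nonempty := by
    rw [hSdef, interior_prod_eq, isOpen_Ioi.interior_eq, interior_Icc]
    exact ⟨(1, (s0+T)/2), by norm_num, by constructor <;> linarith⟩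
  have hSuniq : UniqueDiffOn ℝ S := uniqueDiffOn_convex hSconv hSint
  -- identification of u_x with the within-fderiv, on all of S
  have huxS : ∀ x ∈ Set.Ioi (0:ℝ), ∀ t ∈ Set.Icc s0 T,
      deriv (fun y => u y t) x = fderivWithin ℝ U S (x, t) ((1:ℝ), (0:ℝ)) := by
    intro x hx t ht
    have hdw : DifferentiableWithinAt ℝ U S (x, t) :=
      (husmooth.differentiableOn (by simp)) _ ⟨hx, ht⟩
    have hline : HasDerivWithinAt (fun y : ℝ => ((y, t) : ℝ × ℝ)) ((1:ℝ), (0:ℝ))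
        (Set.Ioi (0:ℝ)) x :=
      ((hasDerivAt_id x).prodMk (hasDerivAt_const x t)).hasDerivWithinAt
    have hmap : Set.MapsTo (fun y : ℝ => ((y, t) : ℝ × ℝ)) (Set.Ioi (0:ℝ)) S :=
      fun y hy => ⟨hy, ht⟩
    have hcomp : HasDerivWithinAt (fun y => u y t)
        (fderivWithin ℝ U S (x, t) ((1:ℝ), (0:ℝ))) (Set.Ioi (0:ℝ)) x :=
      by have := hdw.hasFDerivWithinAt.comp_hasDerivWithinAt x hline hmap; exact this
    exact (hcomp.hasDerivAt (isOpen_Ioi.mem_nhds hx)).deriv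
  -- continuity of u_x on S
  have hcont_ux : ContinuousOn (fun q : ℝ × ℝ => deriv (fun y => u y q.2) q.1) S := by
    have h1 : ContinuousOn (fun q => fderivWithin ℝ U S q ((1:ℝ), (0:ℝ))) S :=
      (husmooth.continuousOn_fderivWithin hSuniq (by simp)).clm_apply continuousOn_const
    apply h1.congr
    rintro ⟨x, t⟩ ⟨hx, ht⟩
    exact huxS x hx t ht
  -- bounds for arctan
  have harc_abs : ∀ r : ℝ, |Real.arctan r| ≤ 2 := by
    intro r
    have h1 := Real.arctan_lt_pi_div_two r
    have h2 := Real.neg_pi_div_two_lt_arctan r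
    have h3 := Real.pi_le_four
    rw [abs_le]
    constructor <;> linarith
  -- upper bound: arctan u_x ≤ arctan C1
  have hbup : (0:ℝ) ≤ Real.arctan C1 := by
    have := Real.arctan_strictMono hC1
    rw [Real.arctan_zero] at this
    linarith
  have hup : ∀ x > (0:ℝ), ∀ t ∈ Set.Icc s0 T,
      Real.arctan (deriv (fun y => u y t) x) ≤ Real.arctan C1 := by
    apply aux_max_principle s0 T hsT _ hbup
      (fun x t => Real.arctan (deriv (fun y => u y t) x))
    · exact Real.continuous_arctan.comp_continuousOn hcont_ux
    · intro x hx t ht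
      exact harc_abs _
    · intro x hx
      exact Real.arctan_strictMono.monotone (hinit x hx).2
    · intro x hx t ht hgt
      obtain ⟨θx, θxx, θt, g, hfam, hgx, hg', hθt, hident⟩ :=
        aux_pde s0 T u husmooth hupos heq x hx t ht
      set v := deriv (fun y => u y t) x with hvdef
      have htIcc : t ∈ Set.Icc s0 T := Set.Ioo_subset_Icc_self ht
      have hv : C1 < v := Real.arctan_strictMono.lt_iff_lt.1 hgt
      have hvpos : 0 < v := lt_trans hC1 hv
      have hcle : 3/(u x t)^2 - 3/x^2 ≤ 0 := by
        have hxu := hgex x hx t htIcc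
        have h1 : 3/(u x t)^2 ≤ 3/x^2 := by
          apply div_le_div_of_nonneg_left (by norm_num) (by positivity)
          nlinarith
        linarith
      have hσ : 0 ≤ v/(1 + v^2) := div_nonneg hvpos.le (by positivity)
      have hcs : (3/(u x t)^2 - 3/x^2) * (v/(1 + v^2)) ≤ 0 :=
        mul_nonpos_iff.2 (Or.inr ⟨hcle, hσ⟩)
      refine ⟨θx, θxx, θt, 1/(1 + v^2), g, hfam, hgx, hg', hθt, by positivity, ?_, ?_⟩
      · rw [div_le_one (by positivity)]
        nlinarith [sq_nonneg v]
      · linarith [hident, hcs]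
  -- lower bound: 0 ≤ arctan u_x
  have hdown : ∀ x > (0:ℝ), ∀ t ∈ Set.Icc s0 T,
      -Real.arctan (deriv (fun y => u y t) x) ≤ 0 := by
    apply aux_max_principle s0 T hsT _ le_rfl
      (fun x t => -Real.arctan (deriv (fun y => u y t) x))
    · exact (Real.continuous_arctan.comp_continuousOn hcont_ux).neg
    · intro x hx t ht
      rw [abs_neg]
      exact harc_abs _
    · intro x hx
      have h0 : Real.arctan 0 ≤ Real.arctan (deriv (fun y => u y s0) x) :=
        Real.arctan_strictMono.monotone (hinit x hx).1
      rw [Real.arctan_zero] at h0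
      linarith
    · intro x hx t ht hgt
      obtain ⟨θx, θxx, θt, g, hfam, hgx, hg', hθt, hident⟩ :=
        aux_pde s0 T u husmooth hupos heq x hx t ht
      set v := deriv (fun y => u y t) x with hvdef
      have htIcc : t ∈ Set.Icc s0 T := Set.Ioo_subset_Icc_self ht
      have hv : v < 0 := by
        have h1 : Real.arctan v < 0 := by linarith
        by_contra h
        push_neg at h
        have := Real.arctan_strictMono.monotone h
        rw [Real.arctan_zero] at this
        linarith
      have hcle : 3/(u x t)^2 - 3/x^2 ≤ 0 := by
        have hxu := hgex x hx t htIcc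
        have h1 : 3/(u x t)^2 ≤ 3/x^2 := by
          apply div_le_div_of_nonneg_left (by norm_num) (by positivity)
          nlinarith
        linarith
      have hσ : v/(1 + v^2) ≤ 0 :=
        div_nonpos_of_nonpos_of_nonneg hv.le (by positivity)
      have hcs : 0 ≤ (3/(u x t)^2 - 3/x^2) * (v/(1 + v^2)) :=
        mul_nonneg_iff.2 (Or.inr ⟨hcle, hσ⟩)
      refine ⟨-θx, -θxx, -θt, 1/(1 + v^2), fun y => -(g y), ?_, by simp [hgx],
        hg'.neg, hθt.neg, by positivity, ?_, ?_⟩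
      · filter_upwards [hfam] with y hy
        exact hy.neg
      · rw [div_le_one (by positivity)]
        nlinarith [sq_nonneg v]
      · linarith [hident, hcs]
  intro x hx t ht
  constructor
  · have h1 := hdown x hx t ht
    have h2 : Real.arctan 0 ≤ Real.arctan (deriv (fun y => u y t) x) := by
      rw [Real.arctan_zero]; linarith
    exact Real.arctan_strictMono.le_iff_le.1 h2
  · exact Real.arctan_strictMono.le_iff_le.1 (hup x hx t ht)
end

section
/- For every integer k ≥ 1, the function φ_k(y) = y^{−2}·Σ_{n=0}^{k} (binom(k,n)/(2n+1)!!)·y^{2n} satisfies, for all y > 0, the eigenvalue equation (1/2)·φ_k''(y) + (3/y + y/2)·φ_k'(y) + (3/y² − 1/2)·φ_k(y) = (k − 3/2)·φ_k(y). -/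
/-!
Writing `φ_k = Σ c_n y^(2n-2)` with `c_n = binom(k,n)/(2n+1)!!`, the operator sends the Laurent
monomial `y^m` to `(m+2)(m+3)/2 · y^(m-2) + (m-1)/2 · y^m`. For `m = 2n-2` the first coefficient is
`n(2n+1)`, and the recursion `c_(n+1) (n+1)(2n+3) = c_n (k-n)` turns the lowered terms into
`Σ c_n (k-n) y^(2n-2)`. Adding the `(n - 3/2)` part leaves `(k - 3/2) φ_k`.
-/

open Filter Set

open Finset Topology

noncomputable def opL (f : ℝ → ℝ) (y : ℝ) : ℝ :=
  (1 / 2) * deriv (deriv f) y + (3 / y + y / 2) * deriv f y + (3 / y ^ 2 - 1 / 2) * f y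

lemma opL_congr {f g : ℝ → ℝ} {y : ℝ} (h : f =ᶠ[𝓝 y] g) : opL f y = opL g y := by
  simp only [opL, h.deriv.deriv_eq, h.deriv_eq, h.eq_of_nhds]

section LaurentSum

variable {ι : Type*} (s : Finset ι) (c : ι → ℝ) (e : ι → ℤ) {y : ℝ}

lemma hasDerivAt_sum_zpow (hy : y ≠ 0) :
    HasDerivAt (fun x ↦ ∑ i ∈ s, c i * x ^ e i) (∑ i ∈ s, c i * e i * y ^ (e i - 1)) y := by
  refine HasDerivAt.fun_sum fun i _ ↦ ?_
  simpa [mul_assoc] using (hasDerivAt_zpow (e i) y (Or.inl hy)).const_mul (c i)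

lemma deriv_sum_zpow_eventuallyEq (hy : y ≠ 0) :
    deriv (fun x ↦ ∑ i ∈ s, c i * x ^ e i) =ᶠ[𝓝 y]
      fun x ↦ ∑ i ∈ s, c i * e i * x ^ (e i - 1) := by
  filter_upwards [eventually_ne_nhds hy] with x hx using (hasDerivAt_sum_zpow s c e hx).deriv

lemma opL_sum_zpow (hy : y ≠ 0) :
    opL (fun x ↦ ∑ i ∈ s, c i * x ^ e i) y =
      ∑ i ∈ s, c i * ((e i + 2) * (e i + 3) / 2 * y ^ (e i - 2) + (e i - 1) / 2 * y ^ e i) := by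
  have h2 := (deriv_sum_zpow_eventuallyEq s c e hy).deriv_eq.trans
    (hasDerivAt_sum_zpow s (fun i ↦ c i * e i) (fun i ↦ e i - 1) hy).deriv
  simp only [opL, h2, (hasDerivAt_sum_zpow s c e hy).deriv, mul_sum, ← sum_add_distrib]
  refine sum_congr rfl fun i _ ↦ ?_
  have h1 : y ^ (e i - 1) = y ^ (e i - 2) * y := by
    rw [← zpow_add_one₀ hy]; ring_nf
  have h0 : y ^ e i = y ^ (e i - 2) * y ^ 2 := by
    rw [← zpow_natCast, ← zpow_add₀ hy]; norm_num
  rw [sub_sub, show (1 : ℤ) + 1 = 2 by norm_num, h1, h0]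
  field_simp
  push_cast
  ring

end LaurentSum

lemma Finset.sum_range_succ_eq_of_shift {M : Type*} [AddCommMonoid M] {a b : ℕ → M} {k : ℕ}
    (ha : a 0 = 0) (hb : b k = 0) (hab : ∀ n < k, a (n + 1) = b n) :
    ∑ n ∈ range (k + 1), a n = ∑ n ∈ range (k + 1), b n := by
  rw [sum_range_succ', sum_range_succ, ha, hb, add_zero, add_zero]
  exact sum_congr rfl fun n hn ↦ hab n (mem_range.mp hn)

noncomputable def phikCoeff (k n : ℕ) : ℝ :=
  (k.choose n : ℝ) / (Nat.doubleFactorial (2 * n + 1) : ℝ)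

lemma phik_eq_sum_zpow (k : ℕ) {y : ℝ} (hy : y ≠ 0) :
    phik k y = ∑ n ∈ range (k + 1), phikCoeff k n * y ^ (2 * (n : ℤ) - 2) := by
  rw [phik, mul_sum]
  refine sum_congr rfl fun n _ ↦ ?_
  rw [phikCoeff, mul_left_comm, ← zpow_natCast, ← zpow_add₀ hy]
  push_cast
  ring_nf

lemma phikCoeff_succ_mul (k n : ℕ) :
    phikCoeff k (n + 1) * ((n + 1) * (2 * n + 3)) = phikCoeff k n * (k - n) := by
  have hdf : ((2 * (n + 1) + 1).doubleFactorial : ℝ) =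
      (2 * n + 3) * (2 * n + 1).doubleFactorial := by
    rw [show 2 * (n + 1) + 1 = 2 * n + 1 + 2 by ring, Nat.doubleFactorial_add_two]
    push_cast; ring
  have hch : (k.choose (n + 1) : ℝ) * (n + 1) = k.choose n * (k - n) := by
    rcases le_or_gt n k with h | h
    · rw [← Nat.cast_sub h]
      exact_mod_cast Nat.choose_succ_right_eq k n
    · simp [Nat.choose_eq_zero_of_lt h, Nat.choose_eq_zero_of_lt (h.trans (Nat.lt_succ_self n))]
  have : ((2 * n + 1).doubleFactorial : ℝ) ≠ 0 := by positivity
  rw [phikCoeff, phikCoeff, hdf]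
  field_simp
  exact hch

lemma sum_phikCoeff_shift (k : ℕ) (y : ℝ) :
    ∑ n ∈ range (k + 1), phikCoeff k n * (n * (2 * n + 1)) * y ^ (2 * (n : ℤ) - 4) =
      ∑ n ∈ range (k + 1), phikCoeff k n * (k - n) * y ^ (2 * (n : ℤ) - 2) := by
  refine sum_range_succ_eq_of_shift (by simp) (by simp) fun n _ ↦ ?_
  rw [← phikCoeff_succ_mul]
  push_cast
  ring_nf

theorem stmt_16_general (k : ℕ) :
    ∀ y > (0:ℝ),
      (1 / 2) * deriv (deriv (phik k)) y
        + (3 / y + y / 2) * deriv (phik k) y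
        + (3 / y ^ 2 - 1 / 2) * phik k y
      = ((k : ℝ) - 3 / 2) * phik k y := by
  intro y hy
  have hφ : phik k =ᶠ[𝓝 y]
      fun x ↦ ∑ n ∈ range (k + 1), phikCoeff k n * x ^ (2 * (n : ℤ) - 2) := by
    filter_upwards [eventually_ne_nhds hy.ne'] with x hx using phik_eq_sum_zpow k hx
  change opL (phik k) y = _
  rw [opL_congr hφ, opL_sum_zpow _ _ _ hy.ne', hφ.eq_of_nhds, mul_sum]
  calc _ = ∑ n ∈ range (k + 1), (phikCoeff k n * (n * (2 * n + 1)) * y ^ (2 * (n : ℤ) - 4)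
          + phikCoeff k n * (n - 3 / 2) * y ^ (2 * (n : ℤ) - 2)) := by
        refine sum_congr rfl fun n _ ↦ ?_
        rw [show 2 * (n : ℤ) - 2 - 2 = 2 * n - 4 by ring]
        push_cast
        ring
    _ = _ := by
        rw [sum_add_distrib, sum_phikCoeff_shift k y, ← sum_add_distrib]
        exact sum_congr rfl fun n _ ↦ by ring

/-- `φ_k` satisfies the eigenvalue equation `L φ_k = (k − 3/2) φ_k` for the linear
operator `L f = ½ f'' + (3/y + y/2) f' + (3/y² − ½) f`. -/
theorem stmt_16 (k : ℕ) (hk : 1 ≤ k) :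
    ∀ y > (0:ℝ),
      (1 / 2) * deriv (deriv (phik k)) y
        + (3 / y + y / 2) * deriv (phik k) y
        + (3 / y ^ 2 - 1 / 2) * phik k y
      = ((k : ℝ) - 3 / 2) * phik k y :=
  stmt_16_general k
end
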